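/- arXiv:math/9211210 — 11 statements merged into one kernel-verified Lean document; each statement's English description precedes it below -/
import Mathlib

section
/- Let X be a complex Banach space, N a positive integer, and (x_α) a net in X converging to x in the P_N-weak topology (i.e., Q(x_α) → Q(x) for every M-homogeneous polynomial Q with M ≤ N). Then for every N-homogeneous polynomial P, P(x − x_α) → 0. -/
open Filter Topology

/-- If a net `(x_α)` converges to `x` in the `P_N`-weak topology (i.e. against every
`M`-homogeneous polynomial with `M ≤ N`), then `P (x - x_α) → 0` for every
`N`-homogeneous polynomial `P`. -/
theorem PN_weak_lim_of_difference {X : Type*} [NormedAddCommGroup X] [NormedSpace ℂ X]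
    (N : ℕ) (hN : 0 < N)
    {ι : Type*} (l : Filter ι) [l.NeBot] (xα : ι → X) (x : X)
    (hconv : ∀ M : ℕ, 1 ≤ M → M ≤ N →
      ∀ A : ContinuousMultilinearMap ℂ (fun _ : Fin M => X) ℂ,
        Tendsto (fun α => A (fun _ => xα α)) l (𝓝 (A (fun _ => x))))
    (P : ContinuousMultilinearMap ℂ (fun _ : Fin N => X) ℂ)
    (hsymm : ∀ (σ : Equiv.Perm (Fin N)) (v : Fin N → X), P (v ∘ σ) = P v) :
    Tendsto (fun α => P (fun _ => x - xα α)) l (𝓝 0) := by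
  classical
  -- Expand P (x - xα) via multilinearity over all subsets
  have expand : ∀ α, P (fun _ => x - xα α) =
      ∑ s : Finset (Fin N), ((-1 : ℂ) ^ s.card) •
        P (s.piecewise (fun _ => xα α) (fun _ => x)) := by
    intro α
    have h1 : (fun _ : Fin N => x - xα α) =
        (fun _ : Fin N => -(xα α)) + (fun _ : Fin N => x) := by
      funext i; simp [sub_eq_neg_add]
    rw [h1]
    have e1 : P ((fun _ : Fin N => -(xα α)) + fun _ => x) =
        ∑ s : Finset (Fin N),
          P (s.piecewise (fun _ : Fin N => -(xα α)) (fun _ => x)) :=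
      P.toMultilinearMap.map_add_univ _ _
    rw [e1]
    refine Finset.sum_congr rfl fun s _ => ?_
    have h2 : s.piecewise (fun _ : Fin N => -(xα α)) (fun _ => x) =
        s.piecewise (fun i => (-1 : ℂ) • (s.piecewise (fun _ : Fin N => xα α) (fun _ => x)) i)
          (s.piecewise (fun _ : Fin N => xα α) (fun _ => x)) := by
      funext i
      by_cases hi : i ∈ s <;> simp [Finset.piecewise, hi]
    show P.toMultilinearMap _ = _
    rw [h2, P.toMultilinearMap.map_piecewise_smul]
    simp
  simp only [expand]
  -- Each term converges to (-1)^|s| • P (x,…,x)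
  have hterm : ∀ s : Finset (Fin N),
      Tendsto (fun α => ((-1 : ℂ) ^ s.card) •
          P (s.piecewise (fun _ => xα α) (fun _ => x))) l
        (𝓝 (((-1 : ℂ) ^ s.card) • P (fun _ => x))) := by
    intro s
    refine Tendsto.const_smul ?_ _
    rcases Nat.eq_zero_or_pos s.card with h0 | hpos
    · have hs : s = ∅ := Finset.card_eq_zero.mp h0
      subst hs
      simp only [Finset.piecewise_empty]
      exact tendsto_const_nhds
    · set k := s.card with hk
      have hkN : k ≤ N := by
        simpa using Finset.card_le_card (Finset.subset_univ s)
      -- build the continuous restriction fixing coordinates outside s to x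
      set A : ContinuousMultilinearMap ℂ (fun _ : Fin k => X) ℂ :=
        (P.toMultilinearMap.restr s rfl x).mkContinuous (‖P‖ * ‖x‖ ^ (N - k))
          (fun v => MultilinearMap.restr_norm_le _ s rfl x (fun m => P.le_opNorm m) v)
        with hA
      have hAval : ∀ y : X, A (fun _ => y) = P (s.piecewise (fun _ => y) (fun _ => x)) := by
        intro y
        have e2 : A (fun _ : Fin k => y) = P (fun j => if h : j ∈ s then y else x) := rfl
        rw [e2]
        congr 1
      have hAx : A (fun _ => x) = P (fun _ => x) := by
        rw [hAval x]
        congr 1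
        funext i
        by_cases hi : i ∈ s <;> simp [Finset.piecewise, hi]
      have := hconv k hpos hkN A
      rw [hAx] at this
      simpa only [hAval] using this
  have hsum := tendsto_finset_sum Finset.univ (fun s _ => hterm s)
  -- the limit is 0
  have hzero : ∑ s : Finset (Fin N), ((-1 : ℂ) ^ s.card) • P (fun _ => x) = 0 := by
    rw [← Finset.sum_smul]
    have hcoef : ∑ s : Finset (Fin N), ((-1 : ℂ) ^ s.card) = 0 := by
      have h := Finset.prod_add (fun _ : Fin N => (-1 : ℂ)) (fun _ => 1) Finset.univ
      simp only [neg_add_cancel, Finset.prod_const, Finset.prod_const_one, one_pow, mul_one,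
        Finset.powerset_univ] at h
      rw [← h]
      simp [zero_pow hN.ne']
    rw [hcoef, zero_smul]
  rw [← hzero]
  exact hsum
end

section
/- Let X be a complex Banach space and N a positive integer. If x − x_α → 0 in the P_N-weak topology, then x_α → x in the P_N-weak topology (and conversely). -/
open Filter Topology

/-- Multinomial expansion of a continuous multilinear map on a sum of two constant vectors. -/
private lemma cmm_expand {X : Type*} [NormedAddCommGroup X] [NormedSpace ℂ X] {M : ℕ}
    (A : ContinuousMultilinearMap ℂ (fun _ : Fin M => X) ℂ) (a b : X) :
    A (fun _ => a + b) = ∑ s : Finset (Fin M), (A.restr s rfl b) (fun _ => a) := by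
  classical
  have h := A.toMultilinearMap.map_add_univ (fun _ => a) (fun _ => b)
  rw [show (fun _ : Fin M => a + b) = (fun _ => a) + (fun _ => b) from rfl]
  rw [show A ((fun _ : Fin M => a) + fun _ => b) =
      A.toMultilinearMap ((fun _ : Fin M => a) + fun _ => b) from rfl, h]
  apply Finset.sum_congr rfl
  intro s _
  show A.toMultilinearMap (s.piecewise _ _)
    = A (fun j => if h : j ∈ s then a else b)
  congr 1

/-- Restriction to the empty set evaluates to the constant `A (fun _ => x)`. -/
private lemma cmm_restr_empty {X : Type*} [NormedAddCommGroup X] [NormedSpace ℂ X] {M : ℕ}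
    (A : ContinuousMultilinearMap ℂ (fun _ : Fin M => X) ℂ) (x v : X) :
    (A.restr (∅ : Finset (Fin M)) rfl x) (fun _ => v) = A (fun _ => x) := by
  show A (fun j => if h : j ∈ (∅ : Finset (Fin M)) then
      (fun _ => v) ((((∅ : Finset (Fin M))).orderIsoOfFin rfl).symm ⟨j, h⟩) else x)
    = A (fun _ => x)
  congr 1

/-- Pulling out signs on the diagonal. -/
private lemma cmm_neg_diag {X : Type*} [NormedAddCommGroup X] [NormedSpace ℂ X] {k : ℕ}
    (B : ContinuousMultilinearMap ℂ (fun _ : Fin k => X) ℂ) (d : X) :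
    B (fun _ => -d) = (-1 : ℂ) ^ k • B (fun _ => d) := by
  have := B.toMultilinearMap.map_smul_univ (fun _ : Fin k => (-1 : ℂ)) (fun _ => d)
  simpa using this

/-- A net `(x_α)` converges to `x` in the `P_N`-weak topology if and only if
`x - x_α` converges to `0` in the `P_N`-weak topology. -/
theorem PN_weak_conv_iff_difference_null {X : Type*} [NormedAddCommGroup X] [NormedSpace ℂ X]
    (N : ℕ) (hN : 0 < N)
    {ι : Type*} (l : Filter ι) [l.NeBot] (xα : ι → X) (x : X) :
    (∀ M : ℕ, 1 ≤ M → M ≤ N →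
      ∀ A : ContinuousMultilinearMap ℂ (fun _ : Fin M => X) ℂ,
        Tendsto (fun α => A (fun _ => x - xα α)) l (𝓝 0)) ↔
    (∀ M : ℕ, 1 ≤ M → M ≤ N →
      ∀ A : ContinuousMultilinearMap ℂ (fun _ : Fin M => X) ℂ,
        Tendsto (fun α => A (fun _ => xα α)) l (𝓝 (A (fun _ => x)))) := by
  classical
  constructor
  · intro h M hM1 hM2 A
    have hrw : ∀ α, A (fun _ => xα α)
        = ∑ s : Finset (Fin M), (A.restr s rfl x) (fun _ => -(x - xα α)) := by
      intro α
      rw [← cmm_expand A (-(x - xα α)) x]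
      congr 1
      funext _
      abel
    have hcard : ∀ s : Finset (Fin M), s.card ≤ N := fun s =>
      le_trans (le_trans (Finset.card_le_univ s) (by simp)) hM2
    have key : ∀ s : Finset (Fin M),
        Tendsto (fun α => (A.restr s rfl x) (fun _ => -(x - xα α))) l
          (𝓝 (if s = ∅ then A (fun _ => x) else 0)) := by
      intro s
      by_cases hs : s = ∅
      · subst hs
        simp only [cmm_restr_empty, if_pos rfl]
        exact tendsto_const_nhds
      · have h1 : 1 ≤ s.card := Finset.card_pos.2 (Finset.nonempty_iff_ne_empty.2 hs)
        have hB := h s.card h1 (hcard s) (A.restr s rfl x)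
        simp only [cmm_neg_diag, if_neg hs]
        have := hB.const_smul ((-1 : ℂ) ^ s.card)
        simpa using this
    have hsum : Tendsto (fun α => ∑ s : Finset (Fin M), (A.restr s rfl x) (fun _ => -(x - xα α)))
        l (𝓝 (∑ s : Finset (Fin M), if s = ∅ then A (fun _ => x) else 0)) :=
      tendsto_finset_sum _ (fun s _ => key s)
    have hval : (∑ s : Finset (Fin M), if s = ∅ then A (fun _ => x) else (0 : ℂ))
        = A (fun _ => x) := by
      rw [Finset.sum_ite_eq' Finset.univ (∅ : Finset (Fin M)) (fun _ => A (fun _ => x))]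
      simp
    rw [hval] at hsum
    simpa only [← hrw] using hsum
  · intro h M hM1 hM2 A
    have hrw : ∀ α, A (fun _ => x - xα α)
        = ∑ s : Finset (Fin M), (A.restr s rfl x) (fun _ => -(xα α)) := by
      intro α
      rw [← cmm_expand A (-(xα α)) x]
      congr 1
      funext _
      abel
    have hcard : ∀ s : Finset (Fin M), s.card ≤ N := fun s =>
      le_trans (le_trans (Finset.card_le_univ s) (by simp)) hM2
    have key : ∀ s : Finset (Fin M),
        Tendsto (fun α => (A.restr s rfl x) (fun _ => -(xα α))) l
          (𝓝 ((A.restr s rfl x) (fun _ => -x))) := by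
      intro s
      by_cases hs : s = ∅
      · subst hs
        simp only [cmm_restr_empty]
        exact tendsto_const_nhds
      · have h1 : 1 ≤ s.card := Finset.card_pos.2 (Finset.nonempty_iff_ne_empty.2 hs)
        have hB := h s.card h1 (hcard s) (A.restr s rfl x)
        simp only [cmm_neg_diag]
        exact hB.const_smul ((-1 : ℂ) ^ s.card)
    have hzero : ∑ s : Finset (Fin M), (A.restr s rfl x) (fun _ => -x) = 0 := by
      rw [← cmm_expand A (-x) x]
      have h0 : (fun _ : Fin M => -x + x) = (fun _ => (0 : X)) := by funext; abel
      rw [h0]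
      haveI : Nonempty (Fin M) := Fin.pos_iff_nonempty.1 hM1
      exact A.toMultilinearMap.map_zero
    have hsum : Tendsto (fun α => ∑ s : Finset (Fin M), (A.restr s rfl x) (fun _ => -(xα α)))
        l (𝓝 (∑ s : Finset (Fin M), (A.restr s rfl x) (fun _ => -x))) :=
      tendsto_finset_sum _ (fun s _ => key s)
    rw [hzero] at hsum
    simpa only [← hrw] using hsum
end

section
/- Let X be a complex Banach space and x, y ∈ X. If P(x) = P(y) for every N-homogeneous polynomial P on X, then y = 0 and x = 0, or x = ζ·y where ζ is a complex N-th root of unity. -/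
/-!
Products of continuous linear functionals are `N`-homogeneous polynomials, so the hypothesis gives
`φ x * ψ x ^ (N - 1) = φ y * ψ y ^ (N - 1)` for all functionals `φ, ψ`. Taking `φ = ψ` shows
`ψ x ^ N = ψ y ^ N`; if `y ≠ 0`, choose `ψ` with `ψ y ≠ 0` and set `ζ = ψ x / ψ y`. Then
`φ x = ζ * φ y` for every `φ`, and functionals separate points.
-/

section Multilinear

variable {R X : Type*} [CommRing R] [TopologicalSpace R] [IsTopologicalRing R]
  [AddCommGroup X] [Module R X] [TopologicalSpace X]

theorem prod_dual_apply_eq_of_forall_multilinear_eq {ι : Type*} [Fintype ι] {x y : X}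
    (h : ∀ A : ContinuousMultilinearMap R (fun _ : ι => X) R, A (fun _ => x) = A (fun _ => y))
    (f : ι → StrongDual R X) : ∏ i, f i x = ∏ i, f i y := by
  simpa using h ((ContinuousMultilinearMap.mkPiAlgebra R ι R).compContinuousLinearMap f)

theorem dual_mul_pow_apply_eq_of_forall_multilinear_eq {M : ℕ} {x y : X}
    (h : ∀ A : ContinuousMultilinearMap R (fun _ : Fin (M + 1) => X) R,
      A (fun _ => x) = A (fun _ => y))
    (φ ψ : StrongDual R X) : φ x * ψ x ^ M = φ y * ψ y ^ M := by
  simpa [Fin.prod_univ_succ] using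
    prod_dual_apply_eq_of_forall_multilinear_eq h (Fin.cons φ fun _ => ψ)

end Multilinear

theorem eq_div_mul_of_mul_pow_eq {K : Type*} [Field K] {a b c d : K} {M : ℕ} (hd : d ≠ 0)
    (hcd : c ^ (M + 1) = d ^ (M + 1)) (h : a * c ^ M = b * d ^ M) : a = c / d * b := by
  have : (a * d) * d ^ M = (b * c) * d ^ M := by
    calc (a * d) * d ^ M = a * c ^ (M + 1) := by rw [hcd]; ring
      _ = (b * c) * d ^ M := by rw [pow_succ, ← mul_assoc, h]; ring
  field_simp
  linear_combination mul_right_cancel₀ (pow_ne_zero M hd) this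

theorem eq_zero_and_eq_zero_or_exists_pow_eq_one_and_eq_smul_of_dual_mul_pow_eq
    {K X : Type*} [Field K] [TopologicalSpace K] [AddCommGroup X] [Module K X]
    [TopologicalSpace X] [SeparatingDual K X] {M : ℕ} {x y : X}
    (h : ∀ φ ψ : StrongDual K X, φ x * ψ x ^ M = φ y * ψ y ^ M) :
    (x = 0 ∧ y = 0) ∨ ∃ ζ : K, ζ ^ (M + 1) = 1 ∧ x = ζ • y := by
  have hpow (ψ : StrongDual K X) : ψ x ^ (M + 1) = ψ y ^ (M + 1) := by
    simpa only [pow_succ'] using h ψ ψ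
  rcases eq_or_ne y 0 with rfl | hy
  · refine .inl ⟨SeparatingDual.eq_zero_of_forall_dual_eq_zero (R := K) fun φ => ?_, rfl⟩
    simpa using hpow φ
  obtain ⟨ψ, hψ⟩ := SeparatingDual.exists_ne_zero (R := K) hy
  refine .inr ⟨ψ x / ψ y, by rw [div_pow, hpow, div_self (pow_ne_zero _ hψ)], ?_⟩
  rw [SeparatingDual.eq_iff_forall_dual_eq (R := K)]
  intro φ
  rw [map_smul, smul_eq_mul]
  exact eq_div_mul_of_mul_pow_eq hψ (hpow ψ) (h φ ψ)

theorem eq_up_to_root_of_unity_of_poly_eq_general {X : Type*} [NormedAddCommGroup X]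
    [NormedSpace ℂ X]
    (N : ℕ) (hN : 0 < N) (x y : X)
    (h : ∀ A : ContinuousMultilinearMap ℂ (fun _ : Fin N => X) ℂ,
      A (fun _ => x) = A (fun _ => y)) :
    (x = 0 ∧ y = 0) ∨ ∃ ζ : ℂ, ζ ^ N = 1 ∧ x = ζ • y := by
  obtain ⟨M, rfl⟩ : ∃ M, N = M + 1 := ⟨N - 1, by omega⟩
  exact eq_zero_and_eq_zero_or_exists_pow_eq_one_and_eq_smul_of_dual_mul_pow_eq
    (dual_mul_pow_apply_eq_of_forall_multilinear_eq h)

/-- If `P x = P y` for every `N`-homogeneous polynomial `P` on a complex Banach space `X`,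
then either `x = y = 0`, or `x = ζ • y` for some complex `N`-th root of unity `ζ`. -/
theorem eq_up_to_root_of_unity_of_poly_eq {X : Type*} [NormedAddCommGroup X]
    [NormedSpace ℂ X] [CompleteSpace X]
    (N : ℕ) (hN : 0 < N) (x y : X)
    (h : ∀ A : ContinuousMultilinearMap ℂ (fun _ : Fin N => X) ℂ,
      A (fun _ => x) = A (fun _ => y)) :
    (x = 0 ∧ y = 0) ∨ ∃ ζ : ℂ, ζ ^ N = 1 ∧ x = ζ • y :=
  eq_up_to_root_of_unity_of_poly_eq_general N hN x y h
end

section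
/- Let X be a complex Banach space and θ_N : X → the N-fold projective tensor product of X given by θ_N(x) = x⊗⋯⊗x. Then for every x ∈ X with x ≠ 0, θ_N^{-1}(θ_N(x)) = { e^{2πik/N}·x : k ∈ ℤ }, i.e., θ_N is N-to-one on nonzero vectors. -/
/-!
Pairing `y^{⊗N} = x^{⊗N}` with `f₁ ⊗ ⋯ ⊗ f_N` gives `∏ fᵢ y = ∏ fᵢ x` for all functionals.
With every `fᵢ = f₀`, where `f₀ x ≠ 0`, this says `f₀(y)^N = f₀(x)^N`; replacing one factor by an
arbitrary `g` then yields `f₀(x) g(y) = f₀(y) g(x)`. Since functionals separate points,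
`y = c • x` with `c = f₀(y) / f₀(x)` an `N`-th root of unity.
-/

open Complex PiTensorProduct Module

theorem PiTensorProduct.prod_apply_eq_of_tprod_eq {R ι : Type*} {M : ι → Type*} [CommSemiring R]
    [Fintype ι] [∀ i, AddCommMonoid (M i)] [∀ i, Module R (M i)] {m m' : ∀ i, M i}
    (h : tprod R m = tprod R m') (f : ∀ i, Dual R (M i)) :
    ∏ i, f i (m i) = ∏ i, f i (m' i) := by
  simpa using congr(dualDistrib (tprod R f) $h)

theorem PiTensorProduct.tprod_const_smul {R ι M : Type*} [CommSemiring R] [Fintype ι]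
    [AddCommMonoid M] [Module R M] (c : R) (x : M) :
    tprod R (fun _ : ι => c • x) = c ^ Fintype.card ι • tprod R (fun _ : ι => x) := by
  simpa using (tprod R).map_smul_univ (fun _ => c) (fun _ : ι => x)

theorem PiTensorProduct.exists_pow_eq_one_smul_of_tprod_const_eq {K V : Type*} [Field K]
    [AddCommGroup V] [Module K V] {n : ℕ} {x y : V} (hx : x ≠ 0)
    (h : tprod K (fun _ : Fin (n + 1) => y) = tprod K (fun _ => x)) :
    ∃ c : K, c ^ (n + 1) = 1 ∧ y = c • x := by
  obtain ⟨f₀, hf₀⟩ := Projective.exists_dual_ne_zero K hx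
  have hprod := prod_apply_eq_of_tprod_eq h
  have hpow : f₀ y ^ (n + 1) = f₀ x ^ (n + 1) := by simpa using hprod fun _ => f₀
  have hsmul : f₀ x • y = f₀ y • x := by
    rw [← sub_eq_zero, ← forall_dual_apply_eq_zero_iff K]
    intro g
    have hmixed : g y * f₀ y ^ n = g x * f₀ x ^ n := by
      simpa [Fin.prod_univ_succ] using hprod (Fin.cons g fun _ => f₀)
    simp only [map_sub, map_smul, smul_eq_mul]
    refine mul_left_cancel₀ (pow_ne_zero n hf₀) ?_
    linear_combination f₀ y * hmixed - g y * hpow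
  refine ⟨f₀ y / f₀ x, by rw [div_pow, hpow, div_self (pow_ne_zero _ hf₀)], ?_⟩
  rw [div_eq_inv_mul, mul_smul, ← hsmul, inv_smul_smul₀ hf₀]

theorem Complex.pow_eq_one_iff_exists_int_eq_exp {N : ℕ} (hN : N ≠ 0) {c : ℂ} :
    c ^ N = 1 ↔ ∃ k : ℤ, c = exp (2 * Real.pi * I * k / N) := by
  have : NeZero N := ⟨hN⟩
  constructor
  · intro hc
    obtain ⟨k, -, rfl⟩ := (isPrimitiveRoot_exp N hN).eq_pow_of_pow_eq_one hc
    refine ⟨k, ?_⟩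
    rw [← exp_nat_mul]
    push_cast
    ring_nf
  · rintro ⟨k, rfl⟩
    rw [← exp_nat_mul, exp_eq_one_iff]
    exact ⟨k, by field_simp⟩

theorem theta_preimage_eq_roots_of_unity_orbit_general {X : Type*} [NormedAddCommGroup X]
    [NormedSpace ℂ X]
    (N : ℕ) (hN : 0 < N) (x : X) (hx : x ≠ 0) :
    {y : X | (PiTensorProduct.tprod ℂ (fun _ : Fin N => y)) =
        (PiTensorProduct.tprod ℂ (fun _ : Fin N => x))} =
      {y : X | ∃ k : ℤ, y = Complex.exp (2 * Real.pi * Complex.I * k / N) • x} := by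
  obtain ⟨n, rfl⟩ := Nat.exists_eq_add_one_of_ne_zero hN.ne'
  ext y
  simp only [Set.mem_ofPred_eq]
  constructor
  · intro h
    obtain ⟨c, hc, rfl⟩ := exists_pow_eq_one_smul_of_tprod_const_eq hx h
    obtain ⟨k, rfl⟩ := (pow_eq_one_iff_exists_int_eq_exp n.succ_ne_zero).1 hc
    exact ⟨k, rfl⟩
  · rintro ⟨k, rfl⟩
    rw [tprod_const_smul, Fintype.card_fin,
      (pow_eq_one_iff_exists_int_eq_exp n.succ_ne_zero).2 ⟨k, rfl⟩, one_smul]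

/-- The diagonal map `θ_N : x ↦ x ⊗ ⋯ ⊗ x` into the `N`-fold (projective) tensor product
is `N`-to-one on nonzero vectors: the preimage of `θ_N x` is exactly
`{ e^{2πik/N} • x : k ∈ ℤ }`. -/
theorem theta_preimage_eq_roots_of_unity_orbit {X : Type*} [NormedAddCommGroup X]
    [NormedSpace ℂ X] [CompleteSpace X]
    (N : ℕ) (hN : 0 < N) (x : X) (hx : x ≠ 0) :
    {y : X | (PiTensorProduct.tprod ℂ (fun _ : Fin N => y)) =
        (PiTensorProduct.tprod ℂ (fun _ : Fin N => x))} =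
      {y : X | ∃ k : ℤ, y = Complex.exp (2 * Real.pi * Complex.I * k / N) • x} :=
  theta_preimage_eq_roots_of_unity_orbit_general N hN x hx
end

section
/- Let X be a Banach space with the P_N Dunford–Pettis property in the form: whenever (P_n) is a weakly null sequence of N-homogeneous polynomials and (x_n) converges P_N-weakly to x, then P_n(x_n) → 0. Then for every m > N, if (x_n) is a P_N-weakly null sequence in X, then θ_m(x_n) = x_n⊗⋯⊗x_n (m times) is weakly null in the m-fold projective tensor product of X. -/
/-
Write `m = k + N` with `k ≥ 1`. Currying an `m`-linear form `A` in its first `k` variables gives a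
`k`-linear map `C` into the `N`-linear forms, and `Pₙ := C(xₙ, …, xₙ)`, symmetrized, is a sequence of
`N`-homogeneous polynomials with `Pₙ(xₙ) = N! · A(xₙ, …, xₙ)`. For every functional `Φ` on the
`N`-linear forms, `Φ(Pₙ)` is a `k`-linear form evaluated at `(xₙ, …, xₙ)`, so by strong induction on
`m` the sequence `(Pₙ)` is weakly null, and the `P_N` Dunford–Pettis property gives `Pₙ(xₙ) → 0`.
-/

open Filter Topology

namespace ContinuousMultilinearMap

section Symmetrize

variable {𝕜 ι E F : Type*} [NontriviallyNormedField 𝕜] [NormedAddCommGroup E] [NormedSpace 𝕜 E]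
  [NormedAddCommGroup F] [NormedSpace 𝕜 F] [Fintype ι] [DecidableEq ι]

variable (𝕜 ι E F) in
noncomputable def symmetrizeL :
    ContinuousMultilinearMap 𝕜 (fun _ : ι => E) F →L[𝕜]
      ContinuousMultilinearMap 𝕜 (fun _ : ι => E) F :=
  ∑ σ : Equiv.Perm ι, (domDomCongrₗᵢ 𝕜 E F σ).toContinuousLinearEquiv.toContinuousLinearMap

theorem symmetrizeL_apply (f : ContinuousMultilinearMap 𝕜 (fun _ : ι => E) F) (v : ι → E) :
    symmetrizeL 𝕜 ι E F f v = ∑ σ : Equiv.Perm ι, f (v ∘ σ) := by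
  simp only [symmetrizeL, sum_apply]
  rfl

theorem symmetrizeL_apply_comp_perm (f : ContinuousMultilinearMap 𝕜 (fun _ : ι => E) F)
    (σ : Equiv.Perm ι) (v : ι → E) :
    symmetrizeL 𝕜 ι E F f (v ∘ σ) = symmetrizeL 𝕜 ι E F f v := by
  simp only [symmetrizeL_apply]
  exact Fintype.sum_equiv (Equiv.mulLeft σ) _ _ fun τ => rfl

theorem symmetrizeL_apply_const (f : ContinuousMultilinearMap 𝕜 (fun _ : ι => E) F) (x : E) :
    symmetrizeL 𝕜 ι E F f (fun _ => x) = Fintype.card (Equiv.Perm ι) • f (fun _ => x) := by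
  simp [symmetrizeL_apply, Function.comp_def]

end Symmetrize

variable {𝕜 E F : Type*} [NontriviallyNormedField 𝕜] [NormedAddCommGroup E] [NormedSpace 𝕜 E]
  [NormedAddCommGroup F] [NormedSpace 𝕜 F]

theorem exists_curry_apply_const {k l m : ℕ} (h : k + l = m)
    (A : ContinuousMultilinearMap 𝕜 (fun _ : Fin m => E) F) :
    ∃ C : ContinuousMultilinearMap 𝕜 (fun _ : Fin k => E)
        (ContinuousMultilinearMap 𝕜 (fun _ : Fin l => E) F),
      ∀ x, C (fun _ => x) (fun _ => x) = A (fun _ => x) :=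
  ⟨(A.domDomCongr (finSumFinEquiv.trans (finCongr h)).symm).currySum, fun x => by simp⟩

end ContinuousMultilinearMap

open ContinuousMultilinearMap

section

variable {𝕜 E : Type*} [NontriviallyNormedField 𝕜] [CharZero 𝕜] [NormedAddCommGroup E]
  [NormedSpace 𝕜 E]

theorem tendsto_apply_const_of_dunfordPettis {k N m : ℕ} (h : k + N = m) {x : ℕ → E}
    (hDP : ∀ P : ℕ → ContinuousMultilinearMap 𝕜 (fun _ : Fin N => E) 𝕜,
      (∀ n (σ : Equiv.Perm (Fin N)) (v : Fin N → E), P n (v ∘ σ) = P n v) →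
      (∀ Φ : StrongDual 𝕜 (ContinuousMultilinearMap 𝕜 (fun _ : Fin N => E) 𝕜),
        Tendsto (fun n => Φ (P n)) atTop (𝓝 0)) →
      Tendsto (fun n => P n (fun _ => x n)) atTop (𝓝 0))
    (hk : ∀ B : ContinuousMultilinearMap 𝕜 (fun _ : Fin k => E) 𝕜,
      Tendsto (fun n => B (fun _ => x n)) atTop (𝓝 0))
    (A : ContinuousMultilinearMap 𝕜 (fun _ : Fin m => E) 𝕜) :
    Tendsto (fun n => A (fun _ => x n)) atTop (𝓝 0) := by
  obtain ⟨C, hC⟩ := exists_curry_apply_const h A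
  set S := symmetrizeL 𝕜 (Fin N) E 𝕜
  have hP := hDP (fun n => S (C fun _ => x n)) (fun n => symmetrizeL_apply_comp_perm _)
    fun Φ => hk ((Φ.comp S).compContinuousMultilinearMap C)
  have hc : (Fintype.card (Equiv.Perm (Fin N)) : 𝕜) ≠ 0 := Nat.cast_ne_zero.2 Fintype.card_ne_zero
  simpa [S, symmetrizeL_apply_const, hC, nsmul_eq_mul, hc] using
    hP.const_mul (Fintype.card (Equiv.Perm (Fin N)) : 𝕜)⁻¹

end

theorem theta_m_weakly_null_of_PN_DunfordPettis_general {X : Type*} [NormedAddCommGroup X]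
    [NormedSpace ℂ X] (N : ℕ) (hN : 0 < N)
    (hDP : ∀ (P : ℕ → ContinuousMultilinearMap ℂ (fun _ : Fin N => X) ℂ),
      (∀ n (σ : Equiv.Perm (Fin N)) (v : Fin N → X), P n (v ∘ σ) = P n v) →
      (∀ Φ : StrongDual ℂ (ContinuousMultilinearMap ℂ (fun _ : Fin N => X) ℂ),
        Tendsto (fun n => Φ (P n)) atTop (𝓝 0)) →
      ∀ (x : ℕ → X) (x₀ : X),
        (∀ M : ℕ, 1 ≤ M → M ≤ N →
          ∀ A : ContinuousMultilinearMap ℂ (fun _ : Fin M => X) ℂ,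
            Tendsto (fun n => A (fun _ => x n)) atTop (𝓝 (A (fun _ => x₀)))) →
        Tendsto (fun n => P n (fun _ => x n)) atTop (𝓝 0))
    (x : ℕ → X)
    (hxnull : ∀ M : ℕ, 1 ≤ M → M ≤ N →
      ∀ A : ContinuousMultilinearMap ℂ (fun _ : Fin M => X) ℂ,
        Tendsto (fun n => A (fun _ => x n)) atTop (𝓝 0)) :
    ∀ m : ℕ, N < m →
      ∀ A : ContinuousMultilinearMap ℂ (fun _ : Fin m => X) ℂ,
        Tendsto (fun n => A (fun _ => x n)) atTop (𝓝 0) := by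
  have hDP₀ P hsymm hweak := hDP P hsymm hweak x 0 fun M hM hMN A => by
    have : Nonempty (Fin M) := ⟨⟨0, hM⟩⟩
    simpa only [← Pi.zero_def, A.map_zero] using hxnull M hM hMN A
  suffices ∀ m, 1 ≤ m → ∀ A : ContinuousMultilinearMap ℂ (fun _ : Fin m => X) ℂ,
      Tendsto (fun n => A (fun _ => x n)) atTop (𝓝 0) from fun m hm => this m (by omega)
  intro m
  induction m using Nat.strong_induction_on with
  | _ m ih =>
    intro hm A
    rcases le_or_gt m N with hmN | hNm
    · exact hxnull m hm hmN A
    · exact tendsto_apply_const_of_dunfordPettis (Nat.sub_add_cancel hNm.le) hDP₀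
        (ih (m - N) (by omega) (by omega)) A

/-- If `X` has the `P_N` Dunford–Pettis property (weakly null sequences of `N`-homogeneous
polynomials tend to zero along `P_N`-weakly convergent sequences), then for every `m > N`,
every `P_N`-weakly null sequence `(x_n)` has `θ_m(x_n) = x_n ⊗ ⋯ ⊗ x_n` weakly null
in the `m`-fold projective tensor product; equivalently, `A (x_n, …, x_n) → 0` for every
bounded `m`-linear form `A` (the dual of the `m`-fold projective tensor product). -/
theorem theta_m_weakly_null_of_PN_DunfordPettis {X : Type*} [NormedAddCommGroup X]
    [NormedSpace ℂ X] [CompleteSpace X] (N : ℕ) (hN : 0 < N)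
    (hDP : ∀ (P : ℕ → ContinuousMultilinearMap ℂ (fun _ : Fin N => X) ℂ),
      (∀ n (σ : Equiv.Perm (Fin N)) (v : Fin N → X), P n (v ∘ σ) = P n v) →
      (∀ Φ : StrongDual ℂ (ContinuousMultilinearMap ℂ (fun _ : Fin N => X) ℂ),
        Tendsto (fun n => Φ (P n)) atTop (𝓝 0)) →
      ∀ (x : ℕ → X) (x₀ : X),
        (∀ M : ℕ, 1 ≤ M → M ≤ N →
          ∀ A : ContinuousMultilinearMap ℂ (fun _ : Fin M => X) ℂ,
            Tendsto (fun n => A (fun _ => x n)) atTop (𝓝 (A (fun _ => x₀)))) →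
        Tendsto (fun n => P n (fun _ => x n)) atTop (𝓝 0))
    (x : ℕ → X)
    (hxnull : ∀ M : ℕ, 1 ≤ M → M ≤ N →
      ∀ A : ContinuousMultilinearMap ℂ (fun _ : Fin M => X) ℂ,
        Tendsto (fun n => A (fun _ => x n)) atTop (𝓝 0)) :
    ∀ m : ℕ, N < m →
      ∀ A : ContinuousMultilinearMap ℂ (fun _ : Fin m => X) ℂ,
        Tendsto (fun n => A (fun _ => x n)) atTop (𝓝 0) :=
  theta_m_weakly_null_of_PN_DunfordPettis_general N hN hDP x hxnull
end

section
/- Let X be a Banach space such that every weakly compact linear operator from the N-fold symmetric projective tensor product ⊗̂^N_s X to any Banach space is completely continuous on the diagonal Δ_N(X). Then whenever (P_n) is a weakly null sequence of N-homogeneous polynomials on X and (x_n) converges P_N-weakly to x, we have P_n(x_n) → 0. -/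
open Filter Topology

/-- The topological dual `E →L[𝕜] 𝕜` of a normed space, as `NormedSpace.Dual` was defined in
the older Mathlib (a type synonym carrying the operator-norm structure). -/
def NormedSpace.Dual (𝕜 : Type*) [NontriviallyNormedField 𝕜] (E : Type*)
    [SeminormedAddCommGroup E] [NormedSpace 𝕜 E] : Type _ :=
  E →L[𝕜] 𝕜

noncomputable instance (𝕜 : Type*) [NontriviallyNormedField 𝕜] (E : Type*) [SeminormedAddCommGroup E]
    [NormedSpace 𝕜 E] : SeminormedAddCommGroup (NormedSpace.Dual 𝕜 E) :=
  ContinuousLinearMap.toSeminormedAddCommGroup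

noncomputable instance (𝕜 : Type*) [NontriviallyNormedField 𝕜] (E : Type*) [SeminormedAddCommGroup E]
    [NormedSpace 𝕜 E] : NormedSpace 𝕜 (NormedSpace.Dual 𝕜 E) :=
  ContinuousLinearMap.toNormedSpace

instance (𝕜 : Type*) [NontriviallyNormedField 𝕜] (E : Type*) [SeminormedAddCommGroup E]
    [NormedSpace 𝕜 E] : FunLike (NormedSpace.Dual 𝕜 E) E 𝕜 :=
  ContinuousLinearMap.funLike

instance (𝕜 : Type*) [NontriviallyNormedField 𝕜] (E : Type*) [SeminormedAddCommGroup E]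
    [NormedSpace 𝕜 E] : ContinuousLinearMapClass (NormedSpace.Dual 𝕜 E) 𝕜 E 𝕜 :=
  ContinuousLinearMap.continuousSemilinearMapClass

/-- The evaluation `θ_N(x) = x ⊗ ⋯ ⊗ x` viewed as a functional on `N`-linear forms. -/
noncomputable def deltaDiag (N : ℕ) {X : Type*} [NormedAddCommGroup X] [NormedSpace ℂ X]
    (x : X) : NormedSpace.Dual ℂ (ContinuousMultilinearMap ℂ (fun _ : Fin N => X) ℂ) :=
  ContinuousMultilinearMap.apply ℂ (fun _ : Fin N => X) ℂ (fun _ => x)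

/-- The canonical copy of the `N`-fold symmetric projective tensor product `⊗̂^N_s X`:
the closed linear span of the diagonal tensors `θ_N(x)` inside the dual of the space of
bounded `N`-linear forms on `X` (into which `⊗̂^N_s X` embeds isomorphically). -/
noncomputable def symTensor (N : ℕ) (X : Type*) [NormedAddCommGroup X] [NormedSpace ℂ X] :
    Submodule ℂ (NormedSpace.Dual ℂ (ContinuousMultilinearMap ℂ (fun _ : Fin N => X) ℂ)) :=
  (Submodule.span ℂ (Set.range (fun x : X => deltaDiag N x))).topologicalClosure

theorem deltaDiag_mem_symTensor (N : ℕ) {X : Type*} [NormedAddCommGroup X]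
    [NormedSpace ℂ X] (x : X) : deltaDiag N x ∈ symTensor N X :=
  Submodule.le_topologicalClosure _ (Submodule.subset_span ⟨x, rfl⟩)

/-- `θ_N(x)` as an element of `⊗̂^N_s X`. -/
noncomputable def deltaD (N : ℕ) {X : Type*} [NormedAddCommGroup X] [NormedSpace ℂ X]
    (x : X) : symTensor N X :=
  ⟨deltaDiag N x, deltaDiag_mem_symTensor N x⟩

/-! The map `T : z ↦ (z (P n))ₙ` sends the dual of the space of `N`-linear forms, and hence
`⊗̂^N_s X`, boundedly into `c₀` because `(P n)` is weakly null. It is weakly compact: a bounded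
sequence `(z m)` has a subsequence along which every coordinate `z m (P k)` converges to some
`a k`; by Hahn–Banach the `a k` are the values `w (P k)` of a single functional `w`, so `a` lies in
`c₀`, and in `c₀` (whose dual is `ℓ¹`) bounded coordinatewise convergence is weak convergence.
The hypothesis then gives `‖T θ_N(x n) - T θ_N(x₀)‖ → 0`, whose `n`-th coordinate is
`P n (x n) - P n (x₀)`, while `P n (x₀) → 0` by weak nullity. -/

open scoped ZeroAtInfty

namespace ZeroAtInftyContinuousMap

section General

variable {α β : Type*} [TopologicalSpace α] [NormedAddCommGroup β]

theorem norm_apply_le (f : C₀(α, β)) (x : α) : ‖f x‖ ≤ ‖f‖ :=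
  f.toBCF.norm_coe_le_norm x

theorem norm_le_of_forall_norm_apply_le {f : C₀(α, β)} {C : ℝ} (hC : 0 ≤ C)
    (h : ∀ x, ‖f x‖ ≤ C) : ‖f‖ ≤ C :=
  (BoundedContinuousFunction.norm_le hC).2 h

theorem sum_apply {ι : Type*} (F : Finset ι) (g : ι → C₀(α, β)) (x : α) :
    (∑ i ∈ F, g i) x = ∑ i ∈ F, g i x :=
  map_sum (⟨⟨fun f : C₀(α, β) => f x, rfl⟩, fun _ _ => rfl⟩ : C₀(α, β) →+ β) g F

def ofTendstoNat (f : ℕ → β) (hf : Tendsto f atTop (𝓝 0)) : C₀(ℕ, β) where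
  toFun := f
  continuous_toFun := continuous_of_discreteTopology
  zero_at_infty' := by rwa [cocompact_eq_atTop]

theorem tendsto_atTop_nat (f : C₀(ℕ, β)) : Tendsto f atTop (𝓝 0) := by
  simpa [cocompact_eq_atTop] using f.zero_at_infty'

end General

variable {𝕜 : Type*} [RCLike 𝕜]

def single (k : ℕ) : C₀(ℕ, 𝕜) :=
  ofTendstoNat (fun j => if j = k then 1 else 0) <|
    tendsto_atTop_of_eventually_const (i₀ := k + 1) fun j hj => if_neg (by omega)

@[simp]
theorem single_apply (k j : ℕ) : single (𝕜 := 𝕜) k j = if j = k then 1 else 0 :=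
  rfl

theorem sum_smul_single_apply (F : Finset ℕ) (a : ℕ → 𝕜) (j : ℕ) :
    (∑ k ∈ F, a k • single k) j = if j ∈ F then a j else 0 := by
  simp [sum_apply]

theorem hasSum_smul_single (h : C₀(ℕ, 𝕜)) : HasSum (fun k => h k • single k) h := by
  rw [HasSum, SummationFilter.unconditional_filter, Metric.tendsto_atTop]
  intro ε hε
  obtain ⟨m, hm⟩ := Metric.tendsto_atTop.1 h.tendsto_atTop_nat (ε / 2) (half_pos hε)
  refine ⟨Finset.range m, fun F hF => ?_⟩
  rw [dist_eq_norm]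
  refine (norm_le_of_forall_norm_apply_le (half_pos hε).le fun j => ?_).trans_lt (half_lt_self hε)
  rw [sub_apply, sum_smul_single_apply]
  split_ifs with hj
  · simpa using (half_pos hε).le
  · have hjm : m ≤ j := by simpa using mt (@hF j) hj
    simpa using (hm j hjm).le

variable (φ : C₀(ℕ, 𝕜) →L[𝕜] 𝕜)

theorem sum_norm_apply_single_le (F : Finset ℕ) : ∑ k ∈ F, ‖φ (single k)‖ ≤ ‖φ‖ := by
  choose s hs_norm hs using fun k => RCLike.exists_norm_eq_mul_self (K := 𝕜) (φ (single k))
  -- test `φ` against the unimodular combination that aligns all the phases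
  have hsum_norm : ‖∑ k ∈ F, s k • (single k : C₀(ℕ, 𝕜))‖ ≤ 1 := by
    refine norm_le_of_forall_norm_apply_le zero_le_one fun j => ?_
    rw [sum_smul_single_apply]
    split_ifs
    exacts [(hs_norm j).le, by simp]
  have hφ : φ (∑ k ∈ F, s k • single k) = ((∑ k ∈ F, ‖φ (single k)‖ : ℝ) : 𝕜) := by
    simp [map_sum, hs]
  calc ∑ k ∈ F, ‖φ (single k)‖ = ‖φ (∑ k ∈ F, s k • single k)‖ := by
        rw [hφ, RCLike.norm_ofReal, abs_of_nonneg (Finset.sum_nonneg fun _ _ => norm_nonneg _)]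
    _ ≤ ‖φ‖ * 1 := φ.le_opNorm_of_le hsum_norm
    _ = ‖φ‖ := mul_one _

theorem summable_norm_apply_single : Summable fun k => ‖φ (single k)‖ :=
  summable_of_sum_le (fun _ => norm_nonneg _) (sum_norm_apply_single_le φ)

theorem hasSum_mul_apply_single (h : C₀(ℕ, 𝕜)) : HasSum (fun k => h k * φ (single k)) (φ h) := by
  simpa using φ.hasSum (hasSum_smul_single h)

theorem tendsto_apply_of_tendsto_apply_of_norm_le (v : ℕ → C₀(ℕ, 𝕜)) (y : C₀(ℕ, 𝕜)) {C : ℝ}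
    (hv : ∀ n, ‖v n‖ ≤ C) (hvy : ∀ k, Tendsto (fun n => v n k) atTop (𝓝 (y k))) :
    Tendsto (fun n => φ (v n)) atTop (𝓝 (φ y)) := by
  rw [← (hasSum_mul_apply_single φ y).tsum_eq]
  simp only [← fun n => (hasSum_mul_apply_single φ (v n)).tsum_eq]
  refine tendsto_tsum_of_dominated_convergence ((summable_norm_apply_single φ).mul_left C)
    (fun k => (hvy k).mul_const _) (Eventually.of_forall fun n k => ?_)
  rw [norm_mul]
  exact mul_le_mul_of_nonneg_right ((norm_apply_le _ k).trans (hv n)) (norm_nonneg _)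

end ZeroAtInftyContinuousMap

theorem exists_strictMono_tendsto_apply {ι β : Type*} [Countable ι] [NormedAddCommGroup β]
    [ProperSpace β] (v : ℕ → ι → β) {C : ℝ} (hv : ∀ n k, ‖v n k‖ ≤ C) :
    ∃ ψ : ℕ → ℕ, StrictMono ψ ∧ ∃ a : ι → β, ∀ k, Tendsto (fun n => v (ψ n) k) atTop (𝓝 (a k)) := by
  have hK : IsCompact (Set.univ.pi fun _ : ι => Metric.closedBall (0 : β) C) :=
    isCompact_univ_pi fun _ => isCompact_closedBall 0 C
  obtain ⟨a, -, ψ, hψ, hlim⟩ :=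
    hK.isSeqCompact fun n k _ => mem_closedBall_zero_iff.2 (hv n k)
  exact ⟨ψ, hψ, a, tendsto_pi_nhds.1 hlim⟩

section Functionals

variable {𝕜 E : Type*} [RCLike 𝕜] [NormedAddCommGroup E] [NormedSpace 𝕜 E]

def convergenceSubmodule (u : ℕ → E →L[𝕜] 𝕜) : Submodule 𝕜 E where
  carrier := {z | ∃ l, Tendsto (fun n => u n z) atTop (𝓝 l)}
  zero_mem' := ⟨0, by simp⟩
  add_mem' := fun ⟨l, hl⟩ ⟨m, hm⟩ => ⟨l + m, by simpa using hl.add hm⟩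
  smul_mem' c _ := fun ⟨l, hl⟩ => ⟨c * l, by simpa using hl.const_mul c⟩

theorem exists_apply_eq_of_tendsto_apply (u : ℕ → E →L[𝕜] 𝕜) {C : ℝ} (hu : ∀ n, ‖u n‖ ≤ C) :
    ∃ w : E →L[𝕜] 𝕜, ∀ z l, Tendsto (fun n => u n z) atTop (𝓝 l) → w z = l := by
  set S := convergenceSubmodule u
  have hlim : ∀ z : S, Tendsto (fun n => u n z) atTop (𝓝 (limUnder atTop fun n => u n z)) :=
    fun z => tendsto_nhds_limUnder z.2
  let L : S →ₗ[𝕜] 𝕜 := linearMapOfTendsto _ (fun n => ((u n).comp S.subtypeL : S →ₗ[𝕜] 𝕜))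
    (tendsto_pi_nhds.2 hlim)
  have hL : ∀ z, ‖L z‖ ≤ C * ‖z‖ := fun z =>
    le_of_tendsto (hlim z).norm <| Eventually.of_forall fun n => (u n).le_of_opNorm_le (hu n) z
  obtain ⟨w, hw, -⟩ := exists_extension_norm_eq S (L.mkContinuous C hL)
  refine ⟨w, fun z l hz => ?_⟩
  have hzS : z ∈ S := ⟨l, hz⟩
  exact (hw ⟨z, hzS⟩).trans (tendsto_nhds_unique (hlim ⟨z, hzS⟩) hz)

end Functionals

section WeaklyCompact

variable {𝕜 D E F : Type*} [RCLike 𝕜] [SeminormedAddCommGroup D] [NormedSpace 𝕜 D]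
  [SeminormedAddCommGroup E] [NormedSpace 𝕜 E] [SeminormedAddCommGroup F] [NormedSpace 𝕜 F]

/-- By Eberlein–Šmulian, this sequential form is weak compactness of `T`. -/
def IsSeqWeaklyCompactOperator (T : E →L[𝕜] F) : Prop :=
  ∀ u : ℕ → E, (∀ n, ‖u n‖ ≤ 1) → ∃ ψ : ℕ → ℕ, StrictMono ψ ∧ ∃ y : F,
    ∀ φ : F →L[𝕜] 𝕜, Tendsto (fun n => φ (T (u (ψ n)))) atTop (𝓝 (φ y))

namespace IsSeqWeaklyCompactOperator

variable {T : E →L[𝕜] F}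

theorem comp_left (hT : IsSeqWeaklyCompactOperator T) {G : Type*} [SeminormedAddCommGroup G]
    [NormedSpace 𝕜 G] (L : F →L[𝕜] G) : IsSeqWeaklyCompactOperator (L.comp T) := by
  intro u hu
  obtain ⟨ψ, hψ, y, hy⟩ := hT u hu
  exact ⟨ψ, hψ, L y, fun φ => hy (φ.comp L)⟩

theorem comp_right (hT : IsSeqWeaklyCompactOperator T) (A : D →L[𝕜] E) (hA : ‖A‖ ≤ 1) :
    IsSeqWeaklyCompactOperator (T.comp A) :=
  fun u hu => hT (fun n => A (u n)) fun n =>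
    (A.le_of_opNorm_le hA (u n)).trans (by simpa using hu n)

end IsSeqWeaklyCompactOperator

end WeaklyCompact

section EvalC0

open ZeroAtInftyContinuousMap

variable {𝕜 E : Type*} [RCLike 𝕜] [NormedAddCommGroup E] [NormedSpace 𝕜 E]

noncomputable def evalC0CLM (P : ℕ → E)
    (hP : ∀ z : E →L[𝕜] 𝕜, Tendsto (fun k => z (P k)) atTop (𝓝 0)) :
    (E →L[𝕜] 𝕜) →L[𝕜] C₀(ℕ, 𝕜) :=
  LinearMap.mkContinuousOfExistsBound
    { toFun := fun z => ofTendstoNat (fun k => z (P k)) (hP z)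
      map_add' := fun _ _ => rfl
      map_smul' := fun _ _ => rfl } <| by
    -- the evaluations at `P k` are pointwise bounded on the (complete) dual: Banach–Steinhaus
    obtain ⟨C, hC⟩ := banach_steinhaus (g := fun k => ContinuousLinearMap.apply 𝕜 𝕜 (P k))
      fun z => (hP z).norm.bddAbove_range.imp fun _ hM k => hM ⟨k, rfl⟩
    have hC0 : 0 ≤ C := (norm_nonneg _).trans (hC 0)
    exact ⟨C, fun z => norm_le_of_forall_norm_apply_le (by positivity) fun k =>
      (ContinuousLinearMap.apply 𝕜 𝕜 (P k)).le_of_opNorm_le (hC k) z⟩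

@[simp]
theorem evalC0CLM_apply (P : ℕ → E) (hP) (z : E →L[𝕜] 𝕜) (k : ℕ) :
    evalC0CLM P hP z k = z (P k) :=
  rfl

theorem isSeqWeaklyCompactOperator_evalC0CLM (P : ℕ → E)
    (hP : ∀ z : E →L[𝕜] 𝕜, Tendsto (fun k => z (P k)) atTop (𝓝 0)) :
    IsSeqWeaklyCompactOperator (evalC0CLM P hP) := by
  intro u hu
  set T := evalC0CLM P hP
  have hTu : ∀ n, ‖T (u n)‖ ≤ ‖T‖ := fun n =>
    (T.le_of_opNorm_le_of_le le_rfl (hu n)).trans_eq (mul_one _)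
  obtain ⟨ψ, hψ, a, ha⟩ := exists_strictMono_tendsto_apply (fun n k => T (u n) k)
    fun n k => (norm_apply_le _ k).trans (hTu n)
  -- the coordinatewise limit `a` lies in `c₀` because it is `T w` for some functional `w`
  obtain ⟨w, hw⟩ := exists_apply_eq_of_tendsto_apply (fun n => u (ψ n)) fun n => hu (ψ n)
  refine ⟨ψ, hψ, T w, fun φ => tendsto_apply_of_tendsto_apply_of_norm_le φ _ _
    (fun n => hTu (ψ n)) fun k => ?_⟩
  rw [evalC0CLM_apply, hw _ _ (ha k)]
  exact ha k

end EvalC0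

theorem PN_DunfordPettis_of_completely_continuous_on_diagonal_general {X : Type u}
    [NormedAddCommGroup X] [NormedSpace ℂ X] (N : ℕ) (hN : 0 < N)
    (hyp : ∀ (Y : Type u) [NormedAddCommGroup Y] [NormedSpace ℂ Y] [CompleteSpace Y]
      (T : symTensor N X →L[ℂ] Y),
      (∀ u : ℕ → symTensor N X, (∀ n, ‖u n‖ ≤ 1) →
        ∃ ψ : ℕ → ℕ, StrictMono ψ ∧ ∃ y : Y,
          ∀ φ : Y →L[ℂ] ℂ, Tendsto (fun n => φ (T (u (ψ n)))) atTop (𝓝 (φ y))) →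
      ∀ (x : ℕ → X) (x₀ : X),
        (∀ A : ContinuousMultilinearMap ℂ (fun _ : Fin N => X) ℂ,
          Tendsto (fun n => A (fun _ => x n)) atTop (𝓝 (A (fun _ => x₀)))) →
        Tendsto (fun n => ‖T (deltaD N (x n)) - T (deltaD N x₀)‖) atTop (𝓝 0))
    (P : ℕ → ContinuousMultilinearMap ℂ (fun _ : Fin N => X) ℂ)
    (hPweak : ∀ Φ : NormedSpace.Dual ℂ (ContinuousMultilinearMap ℂ (fun _ : Fin N => X) ℂ),
      Tendsto (fun n => Φ (P n)) atTop (𝓝 0))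
    (x : ℕ → X) (x₀ : X)
    (hx : ∀ M : ℕ, 1 ≤ M → M ≤ N →
      ∀ A : ContinuousMultilinearMap ℂ (fun _ : Fin M => X) ℂ,
        Tendsto (fun n => A (fun _ => x n)) atTop (𝓝 (A (fun _ => x₀)))) :
    Tendsto (fun n => P n (fun _ => x n)) atTop (𝓝 0) := by
  let up : C₀(ℕ, ℂ) →L[ℂ] ULift.{u} C₀(ℕ, ℂ) :=
    (ContinuousLinearEquiv.ulift (R₁ := ℂ)).symm.toContinuousLinearMap
  let T := up.comp ((evalC0CLM P hPweak).comp (symTensor N X).subtypeL)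
  have hT : IsSeqWeaklyCompactOperator T :=
    ((isSeqWeaklyCompactOperator_evalC0CLM P hPweak).comp_right _
      (Submodule.norm_subtypeL_le _)).comp_left up
  have hdiag := hyp _ T hT x x₀ (hx N hN le_rfl)
  -- the `n`-th coordinate of `T (θ_N(x n)) - T (θ_N(x₀))` is `P n (x n) - P n (x₀)`
  have hdiff : Tendsto (fun n => P n (fun _ => x n) - P n (fun _ => x₀)) atTop (𝓝 0) :=
    squeeze_zero_norm (fun n => ZeroAtInftyContinuousMap.norm_apply_le
      (evalC0CLM P hPweak (deltaDiag N (x n)) - evalC0CLM P hPweak (deltaDiag N x₀)) n) hdiag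
  have hP₀ : Tendsto (fun n => P n (fun _ => x₀)) atTop (𝓝 0) := hPweak (deltaDiag N x₀)
  simpa using hdiff.add hP₀

/-- If every weakly compact operator from `⊗̂^N_s X` to any Banach space is completely
continuous on the diagonal `Δ_N(X)`, then whenever `(P_n)` is a weakly null sequence of
`N`-homogeneous polynomials on `X` and `(x_n)` converges `P_N`-weakly to `x`, one has
`P_n(x_n) → 0`. -/
theorem PN_DunfordPettis_of_completely_continuous_on_diagonal {X : Type u}
    [NormedAddCommGroup X] [NormedSpace ℂ X] [CompleteSpace X] (N : ℕ) (hN : 0 < N)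
    (hyp : ∀ (Y : Type u) [NormedAddCommGroup Y] [NormedSpace ℂ Y] [CompleteSpace Y]
      (T : symTensor N X →L[ℂ] Y),
      (∀ u : ℕ → symTensor N X, (∀ n, ‖u n‖ ≤ 1) →
        ∃ ψ : ℕ → ℕ, StrictMono ψ ∧ ∃ y : Y,
          ∀ φ : Y →L[ℂ] ℂ, Tendsto (fun n => φ (T (u (ψ n)))) atTop (𝓝 (φ y))) →
      ∀ (x : ℕ → X) (x₀ : X),
        (∀ A : ContinuousMultilinearMap ℂ (fun _ : Fin N => X) ℂ,
          Tendsto (fun n => A (fun _ => x n)) atTop (𝓝 (A (fun _ => x₀)))) →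
        Tendsto (fun n => ‖T (deltaD N (x n)) - T (deltaD N x₀)‖) atTop (𝓝 0))
    (P : ℕ → ContinuousMultilinearMap ℂ (fun _ : Fin N => X) ℂ)
    (hPsymm : ∀ n (σ : Equiv.Perm (Fin N)) (v : Fin N → X), P n (v ∘ σ) = P n v)
    (hPweak : ∀ Φ : NormedSpace.Dual ℂ (ContinuousMultilinearMap ℂ (fun _ : Fin N => X) ℂ),
      Tendsto (fun n => Φ (P n)) atTop (𝓝 0))
    (x : ℕ → X) (x₀ : X)
    (hx : ∀ M : ℕ, 1 ≤ M → M ≤ N →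
      ∀ A : ContinuousMultilinearMap ℂ (fun _ : Fin M => X) ℂ,
        Tendsto (fun n => A (fun _ => x n)) atTop (𝓝 (A (fun _ => x₀)))) :
    Tendsto (fun n => P n (fun _ => x n)) atTop (𝓝 0) :=
  PN_DunfordPettis_of_completely_continuous_on_diagonal_general N hN hyp P hPweak x x₀ hx
end

section
/- Let (x_i) be a normalized sequence in a Banach space satisfying ‖∑_{i∈B} a_i x_i‖ ≤ C·|B|^{1/p}·max_{i∈B}|a_i| for all finite sets B of natural numbers and all scalars (a_i), where p > 1. Then for every 1 < r < p there exists a constant D such that ‖∑_{i=1}^{M} a_i x_i‖ ≤ D·(∑_{i=1}^{M} |a_i|^r)^{1/r} for all M and all scalars (a_i). -/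
open Filter Topology Finset

/-- Extrapolation lemma: if a normalized sequence `(x_i)` satisfies
`‖∑_{i ∈ B} a_i x_i‖ ≤ C |B|^{1/p} max_{i ∈ B} |a_i|`, then for every `1 < r < p` it
satisfies an upper `ℓ_r`-estimate. -/
theorem upper_lr_estimate_of_flat_estimate {X : Type*} [NormedAddCommGroup X]
    [NormedSpace ℂ X]
    (x : ℕ → X) (hx : ∀ i, ‖x i‖ = 1)
    (p : ℝ) (hp : 1 < p) (C : ℝ)
    (hflat : ∀ (B : Finset ℕ) (a : ℕ → ℂ) (m : ℝ), (∀ i ∈ B, ‖a i‖ ≤ m) →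
      ‖∑ i ∈ B, a i • x i‖ ≤ C * (B.card : ℝ) ^ (1 / p) * m)
    (r : ℝ) (hr1 : 1 < r) (hrp : r < p) :
    ∃ D : ℝ, ∀ (M : ℕ) (a : ℕ → ℂ),
      ‖∑ i ∈ Finset.range M, a i • x i‖ ≤ D * (∑ i ∈ Finset.range M, ‖a i‖ ^ r) ^ (1 / r) := by
  classical
  have hp0 : (0:ℝ) < p := lt_trans one_pos hp
  have hr0 : (0:ℝ) < r := lt_trans one_pos hr1
  have h2 : (0:ℝ) < 2 := by norm_num
  set q : ℝ := (2:ℝ) ^ (r / p - 1) with hq_def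
  have hq0 : 0 < q := Real.rpow_pos_of_pos h2 _
  have hq1 : q < 1 := by
    have hlt : r / p - 1 < 0 := by
      have : r / p < 1 := (div_lt_one hp0).2 hrp
      linarith
    calc q < 2 ^ (0:ℝ) := Real.rpow_lt_rpow_of_exponent_lt one_lt_two hlt
    _ = 1 := Real.rpow_zero 2
  have hC : 1 ≤ C := by
    have h := hflat {0} (fun _ => 1) 1 (by intro i _; simp)
    simpa [hx 0] using h
  have hC0 : 0 ≤ C := le_trans zero_le_one hC
  set D : ℝ := C * (2:ℝ) ^ (r / p) * (1 - q)⁻¹ with hD_def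
  have hD0 : 0 ≤ D := by
    apply mul_nonneg (mul_nonneg hC0 (le_of_lt (Real.rpow_pos_of_pos h2 _)))
    exact inv_nonneg.2 (by linarith)
  refine ⟨D, ?_⟩
  have key : ∀ (M : ℕ) (a : ℕ → ℂ), (∑ i ∈ range M, ‖a i‖ ^ r) ≤ 1 →
      ‖∑ i ∈ range M, a i • x i‖ ≤ D := by
    intro M a ha
    have hterm_nonneg : ∀ i ∈ range M, (0:ℝ) ≤ ‖a i‖ ^ r := fun i _ =>
      Real.rpow_nonneg (norm_nonneg _) r
    have hle1 : ∀ i ∈ range M, ‖a i‖ ≤ 1 := by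
      intro i hi
      by_contra h
      push_neg at h
      have h1 : (1:ℝ) < ‖a i‖ ^ r := by
        have := Real.one_lt_rpow_iff_of_pos (lt_trans one_pos h) (y := r)
        exact this.2 (Or.inl ⟨h, hr0⟩)
      have h2' : ‖a i‖ ^ r ≤ 1 := le_trans
        (Finset.single_le_sum hterm_nonneg hi) ha
      linarith
    set s : Finset ℕ := (range M).filter (fun i => a i ≠ 0) with hs_def
    have hsum_eq : ∑ i ∈ range M, a i • x i = ∑ i ∈ s, a i • x i := by
      rw [hs_def]
      exact (Finset.sum_filter_of_ne (by
        intro i hi h hzero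
        exact h (by rw [hzero, zero_smul]))).symm
    rcases eq_or_ne s ∅ with hs | hs
    · rw [hsum_eq, hs]
      simpa using hD0
    have hsne : s.Nonempty := Finset.nonempty_iff_ne_empty.2 hs
    -- minimum of norms on s
    have himne : ((s.image fun i => ‖a i‖)).Nonempty := hsne.image _
    set t0 : ℝ := (s.image fun i => ‖a i‖).min' himne with ht0_def
    have ht0_mem := Finset.min'_mem _ himne
    have ht0_pos : 0 < t0 := by
      rcases Finset.mem_image.1 ht0_mem with ⟨i, hi, hieq⟩
      have hne : a i ≠ 0 := (Finset.mem_filter.1 hi).2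
      rw [ht0_def, ← hieq]
      exact norm_pos_iff.2 hne
    have ht0_le : ∀ i ∈ s, t0 ≤ ‖a i‖ := by
      intro i hi
      exact Finset.min'_le _ _ (Finset.mem_image_of_mem _ hi)
    set N : ℕ := ⌊Real.logb 2 t0⁻¹⌋₊ + 1 with hN_def
    set g : ℕ → ℕ := fun i => ⌊Real.logb 2 ‖a i‖⁻¹⌋₊ with hg_def
    have hmaps : ∀ i ∈ s, g i ∈ range N := by
      intro i hi
      simp only [Finset.mem_range, hN_def, hg_def]
      have hnorm_pos : 0 < ‖a i‖ :=
        norm_pos_iff.2 (Finset.mem_filter.1 hi).2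
      have hle : ‖a i‖⁻¹ ≤ t0⁻¹ := by
        apply inv_anti₀ ht0_pos (ht0_le i hi)
      have : Real.logb 2 ‖a i‖⁻¹ ≤ Real.logb 2 t0⁻¹ :=
        Real.logb_le_logb_of_le one_lt_two (inv_pos.2 hnorm_pos) hle
      exact Nat.lt_succ_of_le (Nat.floor_le_floor this)
    -- per-level facts
    have hfiber : ∀ n, ∀ i ∈ s.filter (fun i => g i = n),
        (2:ℝ) ^ (-((n:ℝ)+1)) < ‖a i‖ ∧ ‖a i‖ ≤ (2:ℝ) ^ (-(n:ℝ)) := by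
      intro n i hi
      rcases Finset.mem_filter.1 hi with ⟨his, hgn⟩
      have hnorm_pos : 0 < ‖a i‖ := norm_pos_iff.2 (Finset.mem_filter.1 his).2
      have hinv_pos : 0 < ‖a i‖⁻¹ := inv_pos.2 hnorm_pos
      have hinv_ge1 : 1 ≤ ‖a i‖⁻¹ :=
        (one_le_inv₀ hnorm_pos).2 (hle1 i (Finset.mem_filter.1 his).1)
      have hlog_nonneg : 0 ≤ Real.logb 2 ‖a i‖⁻¹ := Real.logb_nonneg one_lt_two hinv_ge1
      simp only [hg_def] at hgn
      have hfl : (n:ℝ) ≤ Real.logb 2 ‖a i‖⁻¹ := by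
        rw [← hgn]
        exact_mod_cast Nat.floor_le hlog_nonneg
      have hfu : Real.logb 2 ‖a i‖⁻¹ < (n:ℝ) + 1 := by
        rw [← hgn]
        push_cast
        exact Nat.lt_floor_add_one _
      have h1 : (2:ℝ) ^ (n:ℝ) ≤ ‖a i‖⁻¹ :=
        (Real.le_logb_iff_rpow_le one_lt_two hinv_pos).1 hfl
      have h2' : ‖a i‖⁻¹ < (2:ℝ) ^ ((n:ℝ)+1) :=
        (Real.logb_lt_iff_lt_rpow one_lt_two hinv_pos).1 hfu
      constructor
      · rw [Real.rpow_neg (le_of_lt h2)]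
        rw [← inv_inv ‖a i‖]
        exact inv_strictAnti₀ hinv_pos h2'
      · rw [Real.rpow_neg (le_of_lt h2)]
        rw [← inv_inv ‖a i‖]
        exact inv_anti₀ (Real.rpow_pos_of_pos h2 _) h1
    -- cardinality bound
    have hcard : ∀ n, ((s.filter (fun i => g i = n)).card : ℝ) ≤
        (2:ℝ) ^ (((n:ℝ)+1) * r) := by
      intro n
      set B := s.filter (fun i => g i = n) with hB_def
      have hlb : (B.card : ℝ) * ((2:ℝ) ^ (-((n:ℝ)+1))) ^ r ≤ ∑ i ∈ B, ‖a i‖ ^ r := by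
        have := Finset.card_nsmul_le_sum B (fun i => ‖a i‖ ^ r)
          (((2:ℝ) ^ (-((n:ℝ)+1))) ^ r) (by
            intro i hi
            exact Real.rpow_le_rpow (le_of_lt (Real.rpow_pos_of_pos h2 _))
              (le_of_lt (hfiber n i hi).1) (le_of_lt hr0))
        simpa [nsmul_eq_mul] using this
      have hBsub : B ⊆ range M := fun i hi =>
        (Finset.mem_filter.1 ((Finset.mem_filter.1 hi).1)).1
      have hub : ∑ i ∈ B, ‖a i‖ ^ r ≤ 1 :=
        le_trans (Finset.sum_le_sum_of_subset_of_nonneg hBsub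
          (fun i hi _ => Real.rpow_nonneg (norm_nonneg _) r)) ha
      have hcomb : (B.card : ℝ) * ((2:ℝ) ^ (-((n:ℝ)+1))) ^ r ≤ 1 := le_trans hlb hub
      have hpow_eq : ((2:ℝ) ^ (-((n:ℝ)+1))) ^ r = (2:ℝ) ^ (-(((n:ℝ)+1) * r)) := by
        rw [← Real.rpow_mul (le_of_lt h2)]
        congr 1
        ring
      rw [hpow_eq] at hcomb
      have hpos : (0:ℝ) < (2:ℝ) ^ (-(((n:ℝ)+1) * r)) := Real.rpow_pos_of_pos h2 _
      rw [← le_div_iff₀ hpos] at hcomb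
      calc (B.card : ℝ) ≤ 1 / (2:ℝ) ^ (-(((n:ℝ)+1) * r)) := hcomb
        _ = (2:ℝ) ^ (((n:ℝ)+1) * r) := by
            rw [one_div, ← Real.rpow_neg (le_of_lt h2), neg_neg]
    -- main estimate
    rw [hsum_eq, ← Finset.sum_fiberwise_of_maps_to hmaps (fun i => a i • x i)]
    calc ‖∑ n ∈ range N, ∑ i ∈ s.filter (fun i => g i = n), a i • x i‖
        ≤ ∑ n ∈ range N, ‖∑ i ∈ s.filter (fun i => g i = n), a i • x i‖ :=
          norm_sum_le _ _
      _ ≤ ∑ n ∈ range N, C * (2:ℝ) ^ (r / p) * q ^ n := by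
          apply Finset.sum_le_sum
          intro n _
          have hstep : ‖∑ i ∈ s.filter (fun i => g i = n), a i • x i‖ ≤
              C * ((s.filter (fun i => g i = n)).card : ℝ) ^ (1/p) * (2:ℝ) ^ (-(n:ℝ)) :=
            hflat _ _ _ (fun i hi => (hfiber n i hi).2)
          apply le_trans hstep
          have hcard_pow : ((s.filter (fun i => g i = n)).card : ℝ) ^ (1/p) ≤
              (2:ℝ) ^ ((((n:ℝ)+1) * r) * (1/p)) := by
            rw [Real.rpow_mul (le_of_lt h2)]
            exact Real.rpow_le_rpow (Nat.cast_nonneg _) (hcard n)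
              (le_of_lt (one_div_pos.2 hp0))
          have heq : (2:ℝ) ^ ((((n:ℝ)+1) * r) * (1/p)) * (2:ℝ) ^ (-(n:ℝ)) =
              (2:ℝ) ^ (r / p) * q ^ n := by
            rw [hq_def, ← Real.rpow_natCast ((2:ℝ) ^ (r/p - 1)) n,
              ← Real.rpow_mul (le_of_lt h2), ← Real.rpow_add h2, ← Real.rpow_add h2]
            congr 1
            field_simp
            ring
          calc C * ((s.filter (fun i => g i = n)).card : ℝ) ^ (1/p) * (2:ℝ) ^ (-(n:ℝ))
              ≤ C * (2:ℝ) ^ ((((n:ℝ)+1) * r) * (1/p)) * (2:ℝ) ^ (-(n:ℝ)) := by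
                apply mul_le_mul_of_nonneg_right _ (le_of_lt (Real.rpow_pos_of_pos h2 _))
                exact mul_le_mul_of_nonneg_left hcard_pow hC0
            _ = C * ((2:ℝ) ^ (r / p) * q ^ n) := by rw [mul_assoc, heq]
            _ = C * (2:ℝ) ^ (r / p) * q ^ n := by ring
      _ = C * (2:ℝ) ^ (r / p) * ∑ n ∈ range N, q ^ n := by
          rw [Finset.mul_sum]
      _ ≤ D := by
          rw [hD_def]
          apply mul_le_mul_of_nonneg_left _ (mul_nonneg hC0
            (le_of_lt (Real.rpow_pos_of_pos h2 _)))
          rw [geom_sum_eq (ne_of_lt hq1) N]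
          have h1q : (0:ℝ) < 1 - q := by linarith
          rw [div_le_iff_of_neg (by linarith : q - 1 < 0)]
          have hqN : 0 ≤ q ^ N := le_of_lt (pow_pos hq0 N)
          have hinv : (1 - q)⁻¹ * (1 - q) = 1 := inv_mul_cancel₀ (ne_of_gt h1q)
          nlinarith [pow_pos hq0 N]
  -- scaling
  intro M a
  set T : ℝ := ∑ i ∈ range M, ‖a i‖ ^ r with hT_def
  have hT_nonneg : 0 ≤ T :=
    Finset.sum_nonneg fun i _ => Real.rpow_nonneg (norm_nonneg _) r
  rcases eq_or_lt_of_le hT_nonneg with hT0 | hTpos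
  · -- all coefficients vanish
    have hzero : ∀ i ∈ range M, a i = 0 := by
      intro i hi
      have h1 : ‖a i‖ ^ r ≤ 0 := by
        rw [hT_def] at hT0
        have := Finset.single_le_sum
          (f := fun i => ‖a i‖ ^ r)
          (fun j _ => Real.rpow_nonneg (norm_nonneg _) r) hi
        linarith
      have h2' : ‖a i‖ ^ r = 0 :=
        le_antisymm h1 (Real.rpow_nonneg (norm_nonneg _) r)
      have : ‖a i‖ = 0 := by
        by_contra hne
        have hpos : 0 < ‖a i‖ := lt_of_le_of_ne (norm_nonneg _) (Ne.symm hne)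
        have := Real.rpow_pos_of_pos hpos r
        linarith
      exact norm_eq_zero.1 this
    rw [Finset.sum_eq_zero (fun i hi => by rw [hzero i hi, zero_smul])]
    rw [← hT0, Real.zero_rpow (by positivity : 1/r ≠ 0), mul_zero, norm_zero]
  · set S : ℝ := T ^ (1/r) with hS_def
    have hS_pos : 0 < S := Real.rpow_pos_of_pos hTpos _
    have hSr : S ^ r = T := by
      rw [hS_def, ← Real.rpow_mul (le_of_lt hTpos),
        one_div_mul_cancel (ne_of_gt hr0), Real.rpow_one]
    set b : ℕ → ℂ := fun i => ((S:ℂ))⁻¹ * a i with hb_def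
    have hb_norm : ∀ i, ‖b i‖ = S⁻¹ * ‖a i‖ := by
      intro i
      show ‖((S:ℂ))⁻¹ * a i‖ = S⁻¹ * ‖a i‖
      rw [norm_mul, norm_inv, Complex.norm_real, Real.norm_of_nonneg (le_of_lt hS_pos)]
    have hb_sum : ∑ i ∈ range M, ‖b i‖ ^ r = 1 := by
      have hterm : ∀ i ∈ range M, ‖b i‖ ^ r = S⁻¹ ^ r * ‖a i‖ ^ r := by
        intro i _
        rw [hb_norm i, Real.mul_rpow (inv_nonneg.2 (le_of_lt hS_pos)) (norm_nonneg _)]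
      rw [Finset.sum_congr rfl hterm, ← Finset.mul_sum, ← hT_def,
        Real.inv_rpow (le_of_lt hS_pos), hSr, inv_mul_cancel₀ (ne_of_gt hTpos)]
    have hb_eq : ∑ i ∈ range M, b i • x i = ((S:ℂ))⁻¹ • ∑ i ∈ range M, a i • x i := by
      rw [Finset.smul_sum]
      apply Finset.sum_congr rfl
      intro i _
      show (((S:ℂ))⁻¹ * a i) • x i = _
      rw [mul_smul]
    have hkey := key M b (le_of_eq hb_sum)
    rw [hb_eq, norm_smul] at hkey
    have hnormS : ‖((S:ℂ))⁻¹‖ = S⁻¹ := by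
      rw [norm_inv, Complex.norm_real, Real.norm_of_nonneg (le_of_lt hS_pos)]
    rw [hnormS] at hkey
    calc ‖∑ i ∈ range M, a i • x i‖
        = S * (S⁻¹ * ‖∑ i ∈ range M, a i • x i‖) := by
          field_simp
      _ ≤ S * D := mul_le_mul_of_nonneg_left hkey (le_of_lt hS_pos)
      _ = D * T ^ (1/r) := by rw [hS_def]; ring
end

section
/- Let X be a Banach space and (y_n, f_n) a normalized biorthogonal system with f_n ∈ X*, ‖f_n‖ = 1, f_n(y_m) = δ_{nm} and f_n(y_n) ≥ δ > 0 after normalization, such that for some constants C and r > 1 with r' < N (where 1/r + 1/r' = 1), ‖∑_{i=1}^{M} a_i f_i‖ ≤ C·(∑|a_i|^r)^{1/r} for all scalars and M. Then the N-homogeneous polynomial P(y) = ∑_{i=1}^{∞} f_i(y)^N is well-defined and bounded on X with ‖P‖ ≤ C^N, and P(y_n) = f_n(y_n)^N is bounded away from zero; hence (y_n) is not P_N-weakly null. -/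
open Filter Topology Finset

/-- Crude bound: a product of `N` nonnegative reals is at most the sum of their `N`-th powers. -/
lemma aux_prod_le_sum_pow {N : ℕ} (hN : N ≠ 0) (x : Fin N → ℝ) (hx : ∀ j, 0 ≤ x j) :
    ∏ j, x j ≤ ∑ j, x j ^ N := by
  have hne : (Finset.univ : Finset (Fin N)).Nonempty := by
    refine ⟨⟨0, Nat.pos_of_ne_zero hN⟩, Finset.mem_univ _⟩
  obtain ⟨j₀, -, hj₀⟩ := Finset.exists_max_image Finset.univ x hne
  calc ∏ j, x j ≤ ∏ _j : Fin N, x j₀ :=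
        Finset.prod_le_prod (fun j _ => hx j) (fun j _ => hj₀ j (Finset.mem_univ j))
    _ = x j₀ ^ N := by rw [Finset.prod_const, Finset.card_univ, Fintype.card_fin]
    _ ≤ ∑ j, x j ^ N :=
        Finset.single_le_sum (fun j _ => pow_nonneg (hx j) N) (Finset.mem_univ j₀)

set_option maxHeartbeats 1000000 in
/-- Given a normalized biorthogonal system `(y_n, f_n)` whose functionals satisfy an upper
`ℓ_r`-estimate with `r' < N` (`1/r + 1/r' = 1`), the `N`-homogeneous polynomial
`P(y) = ∑ f_i(y)^N` is well defined and bounded with `‖P‖ ≤ C^N`, while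
`P(y_n) = f_n(y_n)^N` is bounded away from zero; hence `(y_n)` is not `P_N`-weakly null. -/
theorem polynomial_separates_biorthogonal_system {X : Type*} [NormedAddCommGroup X]
    [NormedSpace ℂ X] [CompleteSpace X]
    (N : ℕ) (r r' C δ : ℝ) (hr : 1 < r) (hconj : 1 / r + 1 / r' = 1) (hrN : r' < N)
    (y : ℕ → X) (f : ℕ → X →L[ℂ] ℂ)
    (hfnorm : ∀ n, ‖f n‖ = 1)
    (hbi : ∀ n m, f n (y m) = if n = m then 1 else 0)
    (hδ : 0 < δ) (hlower : ∀ n, δ ≤ ‖f n (y n)‖)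
    (hupper : ∀ (M : ℕ) (a : ℕ → ℂ),
      ‖∑ i ∈ Finset.range M, a i • f i‖ ≤ C * (∑ i ∈ Finset.range M, ‖a i‖ ^ r) ^ (1 / r)) :
    (∀ z : X, Summable (fun i => (f i z) ^ N)) ∧
    (∀ z : X, ‖z‖ ≤ 1 → ‖∑' i, (f i z) ^ N‖ ≤ C ^ N) ∧
    (∀ n, (∑' i, (f i (y n)) ^ N) = (f n (y n)) ^ N) ∧
    (∃ A : ContinuousMultilinearMap ℂ (fun _ : Fin N => X) ℂ,
      (∀ (σ : Equiv.Perm (Fin N)) (v : Fin N → X), A (v ∘ σ) = A v) ∧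
      (∀ z : X, A (fun _ => z) = ∑' i, (f i z) ^ N) ∧
      ¬ Tendsto (fun n => A (fun _ => y n)) atTop (𝓝 0)) := by
  have hpq : Real.HolderConjugate r r' := Real.holderConjugate_iff.mpr ⟨hr, by simpa [one_div] using hconj⟩
  have hr'1 : 1 < r' := hpq.symm.lt
  have hr'0 : (0:ℝ) < r' := hpq.symm.pos
  have hC : 1 ≤ C := by
    have h := hupper 1 (fun _ => (1:ℂ))
    simpa [hfnorm 0, Real.one_rpow] using h
  have hC0 : 0 < C := lt_of_lt_of_le zero_lt_one hC
  have hNR : 1 < (N:ℝ) := lt_trans hr'1 hrN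
  have hN0 : N ≠ 0 := by
    rintro rfl; norm_num at hNR
  -- ℓ^{r'} bound by duality, on the unit ball
  have aux_dual : ∀ z : X, ‖z‖ ≤ 1 → ∀ M : ℕ,
      ∑ i ∈ Finset.range M, ‖f i z‖ ^ r' ≤ C ^ r' := by
    intro z hz M
    set w : ℕ → ℂ := fun i => f i z with hw
    set a : ℕ → ℂ := fun i => (starRingEnd ℂ) (w i) * ((‖w i‖ ^ (r' - 2) : ℝ) : ℂ) with ha
    set S : ℝ := ∑ i ∈ Finset.range M, ‖w i‖ ^ r' with hS
    have hS0 : 0 ≤ S := Finset.sum_nonneg fun i _ => Real.rpow_nonneg (norm_nonneg _) _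
    have hterm : ∀ i, a i * w i = ((‖w i‖ ^ r' : ℝ) : ℂ) := by
      intro i
      by_cases h0 : w i = 0
      · simp [ha, h0, Real.zero_rpow (ne_of_gt hr'0)]
      · have hn : (0:ℝ) < ‖w i‖ := norm_pos_iff.2 h0
        have hconjmul : (starRingEnd ℂ) (w i) * w i = ((‖w i‖ ^ (2:ℝ) : ℝ) : ℂ) := by
          rw [RCLike.conj_mul]
          norm_cast
        calc a i * w i = ((starRingEnd ℂ) (w i) * w i) * ((‖w i‖ ^ (r' - 2) : ℝ) : ℂ) := by
              rw [ha]; ring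
          _ = ((‖w i‖ ^ (2:ℝ) * ‖w i‖ ^ (r' - 2) : ℝ) : ℂ) := by rw [hconjmul]; push_cast; ring
          _ = ((‖w i‖ ^ r' : ℝ) : ℂ) := by rw [← Real.rpow_add hn]; norm_num
    have hna : ∀ i, ‖a i‖ ^ r = ‖w i‖ ^ r' := by
      intro i
      by_cases h0 : w i = 0
      · simp [ha, h0, Real.zero_rpow hpq.ne_zero, Real.zero_rpow (ne_of_gt hr'0)]
      · have hn : (0:ℝ) < ‖w i‖ := norm_pos_iff.2 h0
        have h1 : ‖a i‖ = ‖w i‖ ^ (r' - 1) := by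
          rw [ha]
          simp only [norm_mul, RCLike.norm_conj, Complex.norm_real, Real.norm_eq_abs,
            abs_of_nonneg (Real.rpow_nonneg (norm_nonneg _) _)]
          nth_rewrite 1 [← Real.rpow_one ‖w i‖]
          rw [← Real.rpow_add hn]
          congr 1; ring
        rw [h1, ← Real.rpow_mul (norm_nonneg _), hpq.symm.sub_one_mul_conj]
    have happ : ((S : ℝ) : ℂ) = (∑ i ∈ Finset.range M, a i • f i) z := by
      simp only [ContinuousLinearMap.sum_apply, ContinuousLinearMap.smul_apply, smul_eq_mul]
      rw [hS, Complex.ofReal_sum]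
      exact Finset.sum_congr rfl fun i _ => (hterm i).symm
    have hmain : S ≤ C * S ^ (1/r) := by
      have h1 : ‖((S:ℝ):ℂ)‖ = S := by
        rw [Complex.norm_real, Real.norm_eq_abs, abs_of_nonneg hS0]
      have h2 : (∑ i ∈ Finset.range M, ‖a i‖ ^ r) = S := by
        rw [hS]; exact Finset.sum_congr rfl fun i _ => hna i
      calc S = ‖((S:ℝ):ℂ)‖ := h1.symm
        _ = ‖(∑ i ∈ Finset.range M, a i • f i) z‖ := by rw [happ]
        _ ≤ ‖∑ i ∈ Finset.range M, a i • f i‖ * ‖z‖ :=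
            (∑ i ∈ Finset.range M, a i • f i).le_opNorm z
        _ ≤ (C * (∑ i ∈ Finset.range M, ‖a i‖ ^ r) ^ (1/r)) * 1 := by
            refine mul_le_mul (hupper M a) hz (norm_nonneg z)
              (mul_nonneg hC0.le (Real.rpow_nonneg
                (Finset.sum_nonneg fun i _ => Real.rpow_nonneg (norm_nonneg _) _) _))
        _ = C * S ^ (1/r) := by rw [mul_one, h2]
    by_cases hSz : S = 0
    · calc ∑ i ∈ Finset.range M, ‖f i z‖ ^ r' = S := rfl
        _ = 0 := hSz
        _ ≤ C ^ r' := Real.rpow_nonneg hC0.le r'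
    · have hSpos : 0 < S := lt_of_le_of_ne hS0 (Ne.symm hSz)
      have hfr : 0 < S ^ (1/r) := Real.rpow_pos_of_pos hSpos _
      have hsplit : S ^ (1/r) * S ^ (1/r') = S := by
        rw [← Real.rpow_add hSpos, hconj, Real.rpow_one]
      have h2 : S ^ (1/r') ≤ C := by
        have h3 : S ^ (1/r) * S ^ (1/r') ≤ S ^ (1/r) * C := by
          rw [hsplit]
          calc S ≤ C * S ^ (1/r) := hmain
            _ = S ^ (1/r) * C := mul_comm _ _
        exact le_of_mul_le_mul_left h3 hfr
      calc S = (S ^ (1/r')) ^ r' := by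
            rw [← Real.rpow_mul hS0, one_div, inv_mul_cancel₀ (ne_of_gt hr'0), Real.rpow_one]
        _ ≤ C ^ r' := Real.rpow_le_rpow (Real.rpow_nonneg hS0 _) h2 hr'0.le
  -- ℓ^N bound on the unit ball
  have aux_unit : ∀ z : X, ‖z‖ ≤ 1 → ∀ M : ℕ,
      ∑ i ∈ Finset.range M, ‖f i z‖ ^ N ≤ C ^ N := by
    intro z hz M
    have step1 : ∑ i ∈ Finset.range M, ‖f i z‖ ^ N ≤ ∑ i ∈ Finset.range M, ‖f i z‖ ^ r' := by
      refine Finset.sum_le_sum fun i _ => ?_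
      have hle1 : ‖f i z‖ ≤ 1 := by
        calc ‖f i z‖ ≤ ‖f i‖ * ‖z‖ := (f i).le_opNorm z
          _ ≤ 1 * 1 := by
              refine mul_le_mul (le_of_eq (hfnorm i)) hz (norm_nonneg z) zero_le_one
          _ = 1 := mul_one 1
      rw [← Real.rpow_natCast]
      by_cases h0 : ‖f i z‖ = 0
      · rw [h0, Real.zero_rpow (by exact_mod_cast hN0), Real.zero_rpow (ne_of_gt hr'0)]
      · exact Real.rpow_le_rpow_of_exponent_ge
          (lt_of_le_of_ne (norm_nonneg _) (Ne.symm h0)) hle1 hrN.le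
    calc ∑ i ∈ Finset.range M, ‖f i z‖ ^ N ≤ ∑ i ∈ Finset.range M, ‖f i z‖ ^ r' := step1
      _ ≤ C ^ r' := aux_dual z hz M
      _ ≤ C ^ (N:ℝ) := Real.rpow_le_rpow_of_exponent_le hC hrN.le
      _ = C ^ N := Real.rpow_natCast C N
  -- ℓ^N bound for all z, by homogeneity
  have aux_all : ∀ (z : X) (M : ℕ),
      ∑ i ∈ Finset.range M, ‖f i z‖ ^ N ≤ C ^ N * ‖z‖ ^ N := by
    intro z M
    by_cases hz0 : z = 0
    · simp [hz0, zero_pow hN0]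
    · have hzpos : 0 < ‖z‖ := norm_pos_iff.2 hz0
      set u : X := ((‖z‖:ℂ))⁻¹ • z with hu
      have hun : ‖u‖ = 1 := by
        rw [hu, norm_smul, norm_inv, Complex.norm_real, Real.norm_eq_abs, abs_of_pos hzpos]
        exact inv_mul_cancel₀ (ne_of_gt hzpos)
      have hfz : ∀ i, ‖f i z‖ = ‖z‖ * ‖f i u‖ := by
        intro i
        have hzu : z = ((‖z‖:ℂ)) • u := by
          rw [hu, smul_smul, mul_inv_cancel₀ (by exact_mod_cast ne_of_gt hzpos), one_smul]
        conv_lhs => rw [hzu]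
        rw [map_smul, smul_eq_mul, norm_mul, Complex.norm_real, Real.norm_eq_abs, abs_of_pos hzpos]
      calc ∑ i ∈ Finset.range M, ‖f i z‖ ^ N
          = ∑ i ∈ Finset.range M, ‖z‖ ^ N * ‖f i u‖ ^ N := by
            refine Finset.sum_congr rfl fun i _ => ?_
            rw [hfz i, mul_pow]
        _ = ‖z‖ ^ N * ∑ i ∈ Finset.range M, ‖f i u‖ ^ N := by rw [Finset.mul_sum]
        _ ≤ ‖z‖ ^ N * C ^ N := by
            exact mul_le_mul_of_nonneg_left (aux_unit u hun.le M) (by positivity)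
        _ = C ^ N * ‖z‖ ^ N := mul_comm _ _
  have aux_summable : ∀ z : X, Summable fun i => ‖f i z‖ ^ N := by
    intro z
    exact summable_of_sum_range_le (fun i => by positivity) (fun M => aux_all z M)
  have aux_tsum_unit : ∀ z : X, ‖z‖ ≤ 1 → ∑' i, ‖f i z‖ ^ N ≤ C ^ N := by
    intro z hz
    exact Summable.tsum_le_of_sum_range_le (aux_summable z) (fun M => aux_unit z hz M)
  -- Part 1
  have part1 : ∀ z : X, Summable fun i => (f i z) ^ N := by
    intro z
    refine Summable.of_norm ?_
    simpa [norm_pow] using aux_summable z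
  refine ⟨part1, ?_, ?_, ?_⟩
  · -- Part 2
    intro z hz
    refine le_trans (norm_tsum_le_tsum_norm ?_) ?_
    · simpa [norm_pow] using aux_summable z
    · calc ∑' i, ‖(f i z) ^ N‖ = ∑' i, ‖f i z‖ ^ N := by simp [norm_pow]
        _ ≤ C ^ N := aux_tsum_unit z hz
  · -- Part 3
    intro n
    refine tsum_eq_single n fun i hi => ?_
    rw [hbi i n, if_neg hi, zero_pow hN0]
  · -- Part 4
    set Ai : ℕ → ContinuousMultilinearMap ℂ (fun _ : Fin N => X) ℂ := fun i =>
      (ContinuousMultilinearMap.mkPiAlgebra ℂ (Fin N) ℂ).compContinuousLinearMap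
        (fun _ => f i) with hAi
    have hAiapp : ∀ i (v : Fin N → X), Ai i v = ∏ j, f i (v j) := by
      intro i v
      simp [hAi]
    have hsum2 : ∀ v : Fin N → X, Summable fun i => ‖Ai i v‖ := by
      intro v
      have hsumS : Summable fun i => ∑ j : Fin N, ‖f i (v j)‖ ^ N :=
        summable_sum (s := Finset.univ) fun j _ => aux_summable (v j)
      refine Summable.of_nonneg_of_le (fun i => norm_nonneg _) (fun i => ?_) hsumS
      rw [hAiapp, norm_prod]
      exact aux_prod_le_sum_pow hN0 _ (fun j => norm_nonneg _)
    have hsum3 : ∀ v : Fin N → X, Summable fun i => Ai i v := fun v => (hsum2 v).of_norm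
    set B : MultilinearMap ℂ (fun _ : Fin N => X) ℂ :=
      { toFun := fun v => ∑' i, Ai i v
        map_update_add' := by
          intro inst v k x x'
          have : inst = instDecidableEqFin N := Subsingleton.elim _ _
          subst this
          simp only [ContinuousMultilinearMap.map_update_add]
          exact Summable.tsum_add (hsum3 _) (hsum3 _)
        map_update_smul' := by
          intro inst v k c x
          have : inst = instDecidableEqFin N := Subsingleton.elim _ _
          subst this
          simp only [ContinuousMultilinearMap.map_update_smul, smul_eq_mul]
          exact tsum_mul_left } with hB
    have hBapp : ∀ v : Fin N → X, B v = ∑' i, Ai i v := fun v => rfl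
    have hBbound : ∀ v : Fin N → X, ‖B v‖ ≤ ((N:ℝ) * C ^ N) * ∏ j, ‖v j‖ := by
      intro v
      rw [hBapp]
      refine le_trans (norm_tsum_le_tsum_norm (hsum2 v)) ?_
      by_cases h0 : ∃ j, v j = 0
      · obtain ⟨j0, hj0⟩ := h0
        have hz : ∀ i, ‖Ai i v‖ = 0 := by
          intro i
          rw [hAiapp, norm_eq_zero]
          refine Finset.prod_eq_zero (Finset.mem_univ j0) ?_
          rw [hj0, map_zero]
        have hp : ∏ j, ‖v j‖ = 0 :=
          Finset.prod_eq_zero (Finset.mem_univ j0) (by rw [hj0, norm_zero])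
        rw [hp, mul_zero]
        calc ∑' i, ‖Ai i v‖ = ∑' _i : ℕ, (0:ℝ) := tsum_congr hz
          _ = 0 := tsum_zero
          _ ≤ 0 := le_refl 0
      · push_neg at h0
        have hvj : ∀ j, 0 < ‖v j‖ := fun j => norm_pos_iff.2 (h0 j)
        set u : Fin N → X := fun j => ((‖v j‖:ℂ))⁻¹ • v j with hu
        have hun : ∀ j, ‖u j‖ = 1 := by
          intro j
          rw [hu]
          simp only
          rw [norm_smul, norm_inv, Complex.norm_real, Real.norm_eq_abs, abs_of_pos (hvj j)]
          exact inv_mul_cancel₀ (ne_of_gt (hvj j))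
        have hfz : ∀ i j, ‖f i (v j)‖ = ‖v j‖ * ‖f i (u j)‖ := by
          intro i j
          have hzu : v j = ((‖v j‖:ℂ)) • u j := by
            rw [hu]
            simp only
            rw [smul_smul, mul_inv_cancel₀ (by exact_mod_cast ne_of_gt (hvj j)), one_smul]
          conv_lhs => rw [hzu]
          rw [map_smul, smul_eq_mul, norm_mul, Complex.norm_real, Real.norm_eq_abs, abs_of_pos (hvj j)]
        have hprodnn : 0 ≤ ∏ j, ‖v j‖ := Finset.prod_nonneg fun j _ => norm_nonneg _
        have hterm : ∀ i, ‖Ai i v‖ ≤ (∏ j, ‖v j‖) * ∑ j, ‖f i (u j)‖ ^ N := by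
          intro i
          rw [hAiapp, norm_prod]
          calc ∏ j, ‖f i (v j)‖ = ∏ j, (‖v j‖ * ‖f i (u j)‖) :=
                Finset.prod_congr rfl fun j _ => hfz i j
            _ = (∏ j, ‖v j‖) * ∏ j, ‖f i (u j)‖ := Finset.prod_mul_distrib
            _ ≤ (∏ j, ‖v j‖) * ∑ j, ‖f i (u j)‖ ^ N :=
                mul_le_mul_of_nonneg_left
                  (aux_prod_le_sum_pow hN0 _ fun j => norm_nonneg _) hprodnn
        have hsumj : ∀ j : Fin N, Summable fun i => ‖f i (u j)‖ ^ N := fun j => aux_summable (u j)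
        have hsum5 : Summable fun i => ∑ j, ‖f i (u j)‖ ^ N := summable_sum fun j _ => hsumj j
        calc ∑' i, ‖Ai i v‖ ≤ ∑' i, (∏ j, ‖v j‖) * ∑ j, ‖f i (u j)‖ ^ N :=
              Summable.tsum_le_tsum hterm (hsum2 v) (hsum5.mul_left _)
          _ = (∏ j, ‖v j‖) * ∑' i, ∑ j, ‖f i (u j)‖ ^ N := tsum_mul_left
          _ = (∏ j, ‖v j‖) * ∑ j, ∑' i, ‖f i (u j)‖ ^ N := by
              rw [Summable.tsum_finsetSum fun j _ => hsumj j]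
          _ ≤ (∏ j, ‖v j‖) * ∑ _j : Fin N, C ^ N := by
              refine mul_le_mul_of_nonneg_left (Finset.sum_le_sum fun j _ => ?_) hprodnn
              exact aux_tsum_unit (u j) (hun j).le
          _ = ((N:ℝ) * C ^ N) * ∏ j, ‖v j‖ := by
              rw [Finset.sum_const, Finset.card_univ, Fintype.card_fin, nsmul_eq_mul]
              ring
    set A : ContinuousMultilinearMap ℂ (fun _ : Fin N => X) ℂ :=
      B.mkContinuous ((N:ℝ) * C ^ N) hBbound with hA
    have hAapp : ∀ v : Fin N → X, A v = ∑' i, ∏ j, f i (v j) := by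
      intro v
      have : A v = B v := by rw [hA, MultilinearMap.coe_mkContinuous]
      rw [this, hBapp]
      exact tsum_congr fun i => hAiapp i v
    have hAdiag : ∀ z : X, A (fun _ => z) = ∑' i, (f i z) ^ N := by
      intro z
      rw [hAapp]
      refine tsum_congr fun i => ?_
      rw [Finset.prod_const, Finset.card_univ, Fintype.card_fin]
    refine ⟨A, ?_, hAdiag, ?_⟩
    · intro σ v
      rw [hAapp, hAapp]
      refine tsum_congr fun i => ?_
      calc ∏ j, f i ((v ∘ σ) j) = ∏ j, f i (v (σ j)) := rfl
        _ = ∏ j, f i (v j) := Equiv.prod_comp σ fun j => f i (v j)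
    · intro hT
      have hval : ∀ n, A (fun _ => y n) = 1 := by
        intro n
        rw [hAdiag, tsum_eq_single n fun i hi => by rw [hbi i n, if_neg hi, zero_pow hN0],
          hbi n n, if_pos rfl, one_pow]
      rw [show (fun n => A fun _ => y n) = fun _ => (1:ℂ) from funext hval] at hT
      exact zero_ne_one (tendsto_nhds_unique hT tendsto_const_nhds)
end

section
/- Suppose every normalized weakly null sequence in a Banach space X admits a subsequence together with a biorthogonal sequence (f_n) in X* satisfying an upper ℓ_p-estimate ‖∑ a_i f_i‖ ≤ C(∑|a_i|^p)^{1/p} for some fixed p > 1 and constant C. Then X is P_N-Schur for every integer N > p' = p/(p−1): every sequence in X that is null against all homogeneous polynomials of degree ≤ N is norm null. -/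
open Filter Topology Finset

/-!
If `x` is `P_N`-weakly null but not norm null, pass to a subsequence bounded away from `0` and
normalize it. The normalized sequence is weakly null, so it has a subsequence `(y_k)` with
biorthogonal functionals `(f_i)` satisfying an upper `ℓ_p`-estimate. Testing that estimate against
a suitable norming sequence of coefficients shows that `v ↦ (f_i v)_i` maps `X` boundedly into
`ℓ_{p'}`, hence into `ℓ_N` since `N ≥ p'`. Consequently `P(w) = ∑ᵢ ∏ⱼ f_i(w_j)` is a bounded
`N`-linear form, and `P(c y_k, …, c y_k) = c^N`, so `P` does not vanish along the subsequence of
`x`.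
-/

def HasUpperLpEstimate (𝕜 : Type*) {F : Type*} [NormedField 𝕜] [NormedAddCommGroup F]
    [NormedSpace 𝕜 F] (f : ℕ → F) (p C : ℝ) : Prop :=
  ∀ (M : ℕ) (a : ℕ → 𝕜),
    ‖∑ i ∈ range M, a i • f i‖ ≤ C * (∑ i ∈ range M, ‖a i‖ ^ p) ^ (1 / p)

theorem HasUpperLpEstimate.nonneg {𝕜 F : Type*} [NormedField 𝕜] [NormedAddCommGroup F]
    [NormedSpace 𝕜 F] {f : ℕ → F} {p C : ℝ} (h : HasUpperLpEstimate 𝕜 f p C) : 0 ≤ C := by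
  have h1 := h 1 1
  simp only [range_one, sum_singleton, Pi.one_apply, one_smul, norm_one, Real.one_rpow,
    mul_one] at h1
  exact (norm_nonneg _).trans h1

theorem sum_pow_le_pow_of_sum_rpow_le {ι : Type*} {s : Finset ι} {t : ι → ℝ}
    (ht : ∀ i, 0 ≤ t i) {B q : ℝ} (hB : 0 ≤ B) (hq : 0 < q) {N : ℕ} (hqN : q ≤ N)
    (h : ∑ i ∈ s, t i ^ q ≤ B ^ q) : ∑ i ∈ s, t i ^ N ≤ B ^ N := by
  have ht_le : ∀ i ∈ s, t i ≤ B := fun i hi =>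
    (Real.rpow_le_rpow_iff (ht i) hB hq).1
      ((single_le_sum (fun j _ => Real.rpow_nonneg (ht j) q) hi).trans h)
  have hsplit : ∀ b : ℝ, 0 ≤ b → b ^ N = b ^ ((N : ℝ) - q) * b ^ q := fun b hb => by
    rw [← Real.rpow_add' hb (by linarith), sub_add_cancel, Real.rpow_natCast]
  calc ∑ i ∈ s, t i ^ N = ∑ i ∈ s, t i ^ ((N : ℝ) - q) * t i ^ q :=
        sum_congr rfl fun i _ => hsplit _ (ht i)
    _ ≤ ∑ i ∈ s, B ^ ((N : ℝ) - q) * t i ^ q := sum_le_sum fun i hi =>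
        mul_le_mul_of_nonneg_right (Real.rpow_le_rpow (ht i) (ht_le i hi) (by linarith))
          (Real.rpow_nonneg (ht i) q)
    _ = B ^ ((N : ℝ) - q) * ∑ i ∈ s, t i ^ q := (mul_sum _ _ _).symm
    _ ≤ B ^ ((N : ℝ) - q) * B ^ q := by gcongr
    _ = B ^ N := (hsplit B hB).symm

section Functionals

variable {𝕜 E : Type*} [RCLike 𝕜] [NormedAddCommGroup E] [NormedSpace 𝕜 E]

theorem HasUpperLpEstimate.sum_norm_apply_rpow_le {f : ℕ → E →L[𝕜] 𝕜} {p q C : ℝ}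
    (h : HasUpperLpEstimate 𝕜 f p C) (hpq : p.HolderConjugate q) (M : ℕ) (v : E) :
    ∑ i ∈ range M, ‖f i v‖ ^ q ≤ (C * ‖v‖) ^ q := by
  set S := ∑ i ∈ range M, ‖f i v‖ ^ q
  have hS0 : 0 ≤ S := sum_nonneg fun i _ => by positivity
  rcases hS0.eq_or_lt with hS | hS
  · rw [← hS]
    exact Real.rpow_nonneg (mul_nonneg h.nonneg (norm_nonneg v)) q
  -- `∑ a i • f i` attains `S` at `v`, while its norm is controlled by `S ^ (1 / p)`;
  -- `x / 0 = 0` makes `a i = 0` whenever `f i v = 0`.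
  set a : ℕ → 𝕜 := fun i => ((‖f i v‖ ^ q : ℝ) : 𝕜) / f i v
  have ha_apply : ∀ i, a i * f i v = ((‖f i v‖ ^ q : ℝ) : 𝕜) := fun i => by
    by_cases h0 : f i v = 0
    · simp [a, h0, Real.zero_rpow hpq.symm.ne_zero]
    · exact div_mul_cancel₀ _ h0
  have ha_norm : ∀ i, ‖a i‖ ^ p = ‖f i v‖ ^ q := fun i => by
    by_cases h0 : f i v = 0
    · simp [a, h0, Real.zero_rpow hpq.ne_zero, Real.zero_rpow hpq.symm.ne_zero]
    · have hpos : 0 < ‖f i v‖ := norm_pos_iff.2 h0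
      rw [norm_div, RCLike.norm_ofReal, abs_of_nonneg (by positivity),
        ← Real.rpow_sub_one hpos.ne', ← Real.rpow_mul hpos.le, hpq.symm.sub_one_mul_conj]
  have hSv : S ≤ C * S ^ (1 / p) * ‖v‖ := calc
    S = ‖(∑ i ∈ range M, a i • f i) v‖ := by
        simp only [_root_.sum_apply, FunLike.coe_smul, Pi.smul_apply, smul_eq_mul,
          ha_apply]
        rw [← RCLike.ofReal_sum, RCLike.norm_ofReal, abs_of_nonneg hS0]
    _ ≤ ‖∑ i ∈ range M, a i • f i‖ * ‖v‖ := ContinuousLinearMap.le_opNorm _ _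
    _ ≤ C * (∑ i ∈ range M, ‖a i‖ ^ p) ^ (1 / p) * ‖v‖ := by gcongr; exact h M a
    _ = C * S ^ (1 / p) * ‖v‖ := by simp only [ha_norm, S]
  have hSq : S ^ (1 / q) ≤ C * ‖v‖ := by
    refine le_of_mul_le_mul_left ?_ (Real.rpow_pos_of_pos hS (1 / p))
    rw [← Real.rpow_add hS, hpq.one_div_add_one_div, div_one, Real.rpow_one]
    linarith
  calc S = (S ^ (1 / q)) ^ q := by
        rw [← Real.rpow_mul hS0, one_div_mul_cancel hpq.symm.ne_zero, Real.rpow_one]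
    _ ≤ (C * ‖v‖) ^ q := Real.rpow_le_rpow (by positivity) hSq hpq.symm.nonneg

theorem HasUpperLpEstimate.sum_norm_apply_pow_le {f : ℕ → E →L[𝕜] 𝕜} {p q C : ℝ}
    (h : HasUpperLpEstimate 𝕜 f p C) (hpq : p.HolderConjugate q) {N : ℕ} (hqN : q ≤ N)
    (M : ℕ) (v : E) : ∑ i ∈ range M, ‖f i v‖ ^ N ≤ C ^ N * ‖v‖ ^ N := by
  rw [← mul_pow]
  exact sum_pow_le_pow_of_sum_rpow_le (fun _ => norm_nonneg _)
    (mul_nonneg h.nonneg (norm_nonneg v)) hpq.symm.pos hqN (h.sum_norm_apply_rpow_le hpq M v)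

end Functionals

theorem prod_le_sum_pow_card {ι : Type*} [Fintype ι] [Nonempty ι] {a : ι → ℝ}
    (ha : ∀ j, 0 ≤ a j) : ∏ j, a j ≤ ∑ j, a j ^ Fintype.card ι := by
  obtain ⟨j₀, -, hj₀⟩ := exists_max_image univ a univ_nonempty
  calc ∏ j, a j ≤ ∏ _j : ι, a j₀ := prod_le_prod (fun j _ => ha j) (fun j _ => hj₀ j (mem_univ j))
    _ = a j₀ ^ Fintype.card ι := by rw [prod_const, card_univ]
    _ ≤ ∑ j, a j ^ Fintype.card ι := single_le_sum (fun j _ => pow_nonneg (ha j) _) (mem_univ j₀)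

noncomputable def MultilinearMap.pointwiseTsum {R ι β F : Type*} {M : ι → Type*} [Semiring R]
    [∀ i, AddCommMonoid (M i)] [∀ i, Module R (M i)] [AddCommMonoid F] [Module R F]
    [TopologicalSpace F] [T2Space F] [ContinuousAdd F] [ContinuousConstSMul R F]
    (P : β → MultilinearMap R M F) (hP : ∀ m, Summable fun b => P b m) :
    MultilinearMap R M F where
  toFun m := ∑' b, P b m
  map_update_add' m i x y := by
    simp only [MultilinearMap.map_update_add]
    exact (hP _).tsum_add (hP _)
  map_update_smul' m i c x := by
    simp only [MultilinearMap.map_update_smul]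
    exact (hP _).tsum_const_smul c

theorem MultilinearMap.norm_map_le_of_forall_norm_eq_one {𝕜 ι F : Type*} {E : ι → Type*}
    [RCLike 𝕜] [Fintype ι] [∀ i, NormedAddCommGroup (E i)] [∀ i, NormedSpace 𝕜 (E i)]
    [NormedAddCommGroup F] [NormedSpace 𝕜 F] (B : MultilinearMap 𝕜 E F) {K : ℝ}
    (hB : ∀ u : ∀ i, E i, (∀ i, ‖u i‖ = 1) → ‖B u‖ ≤ K) (m : ∀ i, E i) :
    ‖B m‖ ≤ K * ∏ i, ‖m i‖ := by
  by_cases hm : ∃ i, m i = 0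
  · obtain ⟨i, hi⟩ := hm
    rw [B.map_coord_zero i hi, norm_zero, prod_eq_zero (mem_univ i) (by simp [hi]), mul_zero]
  push Not at hm
  have hm_eq : m = fun i => (‖m i‖ : 𝕜) • (‖m i‖⁻¹ : 𝕜) • m i :=
    funext fun i => (smul_inv_smul₀ (by simpa using hm i) _).symm
  calc ‖B m‖ = (∏ i, ‖m i‖) * ‖B fun i => (‖m i‖⁻¹ : 𝕜) • m i‖ := by
        conv_lhs => rw [hm_eq, B.map_smul_univ, norm_smul, norm_prod]
        simp only [RCLike.norm_ofReal, abs_norm]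
    _ ≤ (∏ i, ‖m i‖) * K := by
        gcongr
        exact hB _ fun i => norm_smul_inv_norm (hm i)
    _ = K * ∏ i, ‖m i‖ := mul_comm _ _

section TsumProd

variable {𝕜 E : Type*} [RCLike 𝕜] [NormedAddCommGroup E] [NormedSpace 𝕜 E]
  {N : ℕ} {f : ℕ → E →L[𝕜] 𝕜} {D : ℝ}

theorem sum_range_prod_norm_apply_le (hN : N ≠ 0)
    (hf : ∀ M v, ∑ i ∈ range M, ‖f i v‖ ^ N ≤ D * ‖v‖ ^ N) (w : Fin N → E) (M : ℕ) :
    ∑ i ∈ range M, ∏ j, ‖f i (w j)‖ ≤ ∑ j, D * ‖w j‖ ^ N := by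
  have : Nonempty (Fin N) := ⟨⟨0, Nat.pos_of_ne_zero hN⟩⟩
  calc ∑ i ∈ range M, ∏ j, ‖f i (w j)‖ ≤ ∑ i ∈ range M, ∑ j, ‖f i (w j)‖ ^ N := by
        gcongr with i
        simpa using prod_le_sum_pow_card fun j => norm_nonneg (f i (w j))
    _ = ∑ j, ∑ i ∈ range M, ‖f i (w j)‖ ^ N := sum_comm
    _ ≤ ∑ j, D * ‖w j‖ ^ N := sum_le_sum fun j _ => hf M (w j)

theorem summable_prod_apply (hN : N ≠ 0)
    (hf : ∀ M v, ∑ i ∈ range M, ‖f i v‖ ^ N ≤ D * ‖v‖ ^ N) (w : Fin N → E) :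
    Summable fun i => ∏ j, f i (w j) :=
  Summable.of_norm <| by
    simpa only [norm_prod] using summable_of_sum_range_le
      (fun i => prod_nonneg fun j _ => norm_nonneg _) (sum_range_prod_norm_apply_le hN hf w)

theorem exists_continuousMultilinearMap_apply_eq_tsum_prod (hN : N ≠ 0)
    (hf : ∀ M v, ∑ i ∈ range M, ‖f i v‖ ^ N ≤ D * ‖v‖ ^ N) :
    ∃ A : ContinuousMultilinearMap 𝕜 (fun _ : Fin N => E) 𝕜,
      ∀ w, A w = ∑' i, ∏ j, f i (w j) := by
  let P : ℕ → MultilinearMap 𝕜 (fun _ : Fin N => E) 𝕜 := fun i =>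
    (MultilinearMap.mkPiAlgebra 𝕜 (Fin N) 𝕜).compLinearMap fun _ => (f i : E →ₗ[𝕜] 𝕜)
  have hP : ∀ i w, P i w = ∏ j, f i (w j) := fun i w => by simp [P]
  let B := MultilinearMap.pointwiseTsum P fun w => by
    simpa only [hP] using summable_prod_apply hN hf w
  have hB : ∀ w, B w = ∑' i, ∏ j, f i (w j) := fun w => by
    simp only [B, MultilinearMap.pointwiseTsum, MultilinearMap.coe_mk, hP]
  have hB_unit : ∀ u : Fin N → E, (∀ j, ‖u j‖ = 1) → ‖B u‖ ≤ N * D := fun u hu => by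
    rw [hB]
    refine (norm_tsum_le_tsum_norm ?_).trans ?_
    · simpa only [norm_prod] using (summable_prod_apply hN hf u).norm
    · simpa [norm_prod, hu] using Real.tsum_le_of_sum_range_le
        (fun i => prod_nonneg fun j _ => norm_nonneg _) (sum_range_prod_norm_apply_le hN hf u)
  exact ⟨B.mkContinuous _ (B.norm_map_le_of_forall_norm_eq_one hB_unit), hB⟩

theorem tsum_prod_apply_smul_eq_pow (hN : N ≠ 0) {y : ℕ → E}
    (hbio : ∀ n m, f n (y m) = if n = m then 1 else 0) (c : 𝕜) (k : ℕ) :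
    ∑' i, ∏ _j : Fin N, f i (c • y k) = c ^ N := by
  rw [tsum_eq_single k fun i hi => by simp [hbio, hi, hN]]
  simp [hbio]

end TsumProd

theorem exists_strictMono_forall_le_norm_of_not_tendsto {E : Type*} [NormedAddCommGroup E]
    {x : ℕ → E} (h : ¬Tendsto (fun n => ‖x n‖) atTop (𝓝 0)) :
    ∃ ε > 0, ∃ φ : ℕ → ℕ, StrictMono φ ∧ ∀ n, ε ≤ ‖x (φ n)‖ := by
  rw [← tendsto_zero_iff_norm_tendsto_zero, Metric.tendsto_atTop] at h
  push Not at h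
  obtain ⟨ε, hε, hfreq⟩ := h
  obtain ⟨φ, hφ, hφε⟩ := extraction_of_frequently_atTop (frequently_atTop.2 hfreq)
  exact ⟨ε, hε, φ, hφ, by simpa using hφε⟩

theorem tendsto_apply_inv_norm_smul_of_le_norm {𝕜 E F : Type*} [RCLike 𝕜]
    [NormedAddCommGroup E] [NormedSpace 𝕜 E] [NormedAddCommGroup F] [NormedSpace 𝕜 F]
    {x : ℕ → E} {ε : ℝ} (hε : 0 < ε) (hx : ∀ n, ε ≤ ‖x n‖) {g : E →L[𝕜] F}
    (hg : Tendsto (fun n => g (x n)) atTop (𝓝 0)) :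
    Tendsto (fun n => g ((‖x n‖⁻¹ : 𝕜) • x n)) atTop (𝓝 0) := by
  have hbdd : IsBoundedUnder (· ≤ ·) atTop (norm ∘ fun n => (‖x n‖⁻¹ : 𝕜)) :=
    isBoundedUnder_of ⟨ε⁻¹, fun n => by simpa using inv_anti₀ hε (hx n)⟩
  simpa only [map_smul] using hbdd.smul_tendsto_zero hg

theorem PNSchur_of_biorthogonal_upper_p_estimates_general {X : Type*} [NormedAddCommGroup X]
    [NormedSpace ℂ X]
    (p C : ℝ) (hp : 1 < p)
    (H : ∀ y : ℕ → X, (∀ n, ‖y n‖ = 1) →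
      (∀ φ : X →L[ℂ] ℂ, Tendsto (fun n => φ (y n)) atTop (𝓝 0)) →
      ∃ ψ : ℕ → ℕ, StrictMono ψ ∧
        ∃ f : ℕ → X →L[ℂ] ℂ,
          (∀ n m, f n (y (ψ m)) = if n = m then 1 else 0) ∧
          (∀ (M : ℕ) (a : ℕ → ℂ),
            ‖∑ i ∈ Finset.range M, a i • f i‖ ≤
              C * (∑ i ∈ Finset.range M, ‖a i‖ ^ p) ^ (1 / p)))
    (N : ℕ) (hN : p / (p - 1) < N) :
    ∀ x : ℕ → X,
      (∀ M : ℕ, 1 ≤ M → M ≤ N →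
        ∀ A : ContinuousMultilinearMap ℂ (fun _ : Fin M => X) ℂ,
          Tendsto (fun n => A (fun _ => x n)) atTop (𝓝 0)) →
      Tendsto (fun n => ‖x n‖) atTop (𝓝 0) := by
  intro x hx
  have hpq : p.HolderConjugate (p / (p - 1)) := (Real.holderConjugate_iff_eq_conjExponent hp).2 rfl
  have hN1 : 1 ≤ N := by exact_mod_cast (hpq.symm.lt.trans hN).le
  have hweak : ∀ g : X →L[ℂ] ℂ, Tendsto (fun n => g (x n)) atTop (𝓝 0) := fun g => by
    simpa using hx 1 le_rfl hN1 (ContinuousMultilinearMap.ofSubsingleton ℂ X ℂ (0 : Fin 1) g)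
  by_contra hx0
  obtain ⟨ε, hε, φ, hφ, hxφ⟩ := exists_strictMono_forall_le_norm_of_not_tendsto hx0
  have hxφ0 : ∀ n, x (φ n) ≠ 0 := fun n => norm_pos_iff.1 (hε.trans_le (hxφ n))
  obtain ⟨ψ, hψ, f, hbio, hest⟩ := H (fun n => (‖x (φ n)‖⁻¹ : ℂ) • x (φ n))
    (fun n => norm_smul_inv_norm (hxφ0 n))
    (fun g => tendsto_apply_inv_norm_smul_of_le_norm hε hxφ ((hweak g).comp hφ.tendsto_atTop))
  obtain ⟨A, hA⟩ := exists_continuousMultilinearMap_apply_eq_tsum_prod (by omega)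
    (HasUpperLpEstimate.sum_norm_apply_pow_le hest hpq hN.le)
  have hAx : ∀ k, ‖A fun _ => x (φ (ψ k))‖ = ‖x (φ (ψ k))‖ ^ N := fun k => by
    have hx_eq : x (φ (ψ k)) = (‖x (φ (ψ k))‖ : ℂ) • (‖x (φ (ψ k))‖⁻¹ : ℂ) • x (φ (ψ k)) :=
      (smul_inv_smul₀ (by simpa using hxφ0 (ψ k)) _).symm
    conv_lhs => rw [hA, hx_eq, tsum_prod_apply_smul_eq_pow (by omega) hbio]
    simp
  have hlim := tendsto_norm_zero.comp ((hx N hN1 le_rfl A).comp (hφ.comp hψ).tendsto_atTop)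
  obtain ⟨k, hk⟩ := (hlim.eventually_lt_const (pow_pos hε N)).exists
  simp only [Function.comp_def, hAx] at hk
  exact hk.not_ge (pow_le_pow_left₀ hε.le (hxφ (ψ k)) N)

/-- If every normalized weakly null sequence in `X` has a subsequence admitting a
biorthogonal sequence of functionals satisfying an upper `ℓ_p`-estimate (for a fixed
`p > 1` and constant `C`), then `X` is `P_N`-Schur for every integer `N > p' = p/(p-1)`:
every sequence null against all homogeneous polynomials of degree at most `N` is norm
null. -/
theorem PNSchur_of_biorthogonal_upper_p_estimates {X : Type*} [NormedAddCommGroup X]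
    [NormedSpace ℂ X] [CompleteSpace X]
    (p C : ℝ) (hp : 1 < p)
    (H : ∀ y : ℕ → X, (∀ n, ‖y n‖ = 1) →
      (∀ φ : X →L[ℂ] ℂ, Tendsto (fun n => φ (y n)) atTop (𝓝 0)) →
      ∃ ψ : ℕ → ℕ, StrictMono ψ ∧
        ∃ f : ℕ → X →L[ℂ] ℂ,
          (∀ n m, f n (y (ψ m)) = if n = m then 1 else 0) ∧
          (∀ (M : ℕ) (a : ℕ → ℂ),
            ‖∑ i ∈ Finset.range M, a i • f i‖ ≤
              C * (∑ i ∈ Finset.range M, ‖a i‖ ^ p) ^ (1 / p)))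
    (N : ℕ) (hN : p / (p - 1) < N) :
    ∀ x : ℕ → X,
      (∀ M : ℕ, 1 ≤ M → M ≤ N →
        ∀ A : ContinuousMultilinearMap ℂ (fun _ : Fin M => X) ℂ,
          Tendsto (fun n => A (fun _ => x n)) atTop (𝓝 0)) →
      Tendsto (fun n => ‖x n‖) atTop (𝓝 0) :=
  PNSchur_of_biorthogonal_upper_p_estimates_general p C hp H N hN
end

section
/- Let X be a Banach space whose dual X* has Rademacher type p > 1 with type constant T_p. Then for every normalized weakly null basic sequence (y_n) in X there exist a subsequence (y_{n_k}) and a bounded sequence (g_k) in X* biorthogonal to (y_{n_k}) such that (g_k) is weakly null. -/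
open Filter Topology Finset

/-- `E` has Rademacher type `p` with constant `T`: the average over all choices of signs
of `‖∑ ±x_i‖` is at most `T (∑ ‖x_i‖^p)^{1/p}`. -/
def HasTypeWithConstant (E : Type*) [NormedAddCommGroup E] [NormedSpace ℂ E]
    (p T : ℝ) : Prop :=
  ∀ (M : ℕ) (x : Fin M → E),
    (1 / 2 ^ M : ℝ) *
        ∑ ε : Fin M → Bool, ‖∑ i, (if ε i then x i else -x i)‖ ≤
      T * (∑ i, ‖x i‖ ^ p) ^ (1 / p)

/-!
Coordinate functionals of the basic sequence, extended by Hahn–Banach, are biorthogonal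
functionals `F n` with `‖F n‖ ≤ 2K`. Since `X*` has type `p > 1`, `(F n)` has a weakly Cauchy
subsequence `F (d k)`, by Rosenthal's argument: for rationals `r < s`, the infinite Ramsey theorem
makes the property "a norm-one functional is `≤ r` at the even and `≥ s` at the odd ones of the
first `2M` terms" hold along all subsequences or along none. Along all, subsequences with
prescribed parities give for every choice of signs a functional separating them, so every signed
sum of `M` terms has norm `≥ M (s - r) / 2`, contradicting type `p` for large `M`. A diagonal
argument handles all pairs `(r, s)`. The differences `F (d (2k+1)) - F (d (2k))` are then weakly
null and biorthogonal to `y (d (2k+1))`.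
-/

section Ramsey

def DependsOnFirst (N : ℕ) (P : (ℕ → ℕ) → Prop) : Prop :=
  ∀ g g' : ℕ → ℕ, (∀ k < N, g k = g' k) → P g → P g'

def IsHomogeneous (P : (ℕ → ℕ) → Prop) (φ : ℕ → ℕ) : Prop :=
  (∀ ψ, StrictMono ψ → P (φ ∘ ψ)) ∨ ∀ ψ, StrictMono ψ → ¬ P (φ ∘ ψ)

theorem StrictMono.exists_eq_comp_of_range_subset {σ h : ℕ → ℕ} (hσ : StrictMono σ)
    (hh : StrictMono h) (hrange : Set.range h ⊆ Set.range σ) :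
    ∃ ρ, StrictMono ρ ∧ h = σ ∘ ρ := by
  choose ρ hρ using fun k => hrange ⟨k, rfl⟩
  refine ⟨ρ, fun a b hab => ?_, funext fun k => (hρ k).symm⟩
  rw [← hσ.lt_iff_lt, hρ, hρ]
  exact hh hab

/-- `τ ∘ zeroCons g` is the first term of `τ` followed by the subsequence `g` of its tail. -/
def zeroCons (g : ℕ → ℕ) : ℕ → ℕ
  | 0 => 0
  | k + 1 => g k + 1

lemma DependsOnFirst.comp_zeroCons {N : ℕ} {P : (ℕ → ℕ) → Prop} (hP : DependsOnFirst (N + 1) P)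
    (τ : ℕ → ℕ) : DependsOnFirst N fun g => P (τ ∘ zeroCons g) := by
  intro g g' hgg'
  apply hP
  rintro (_ | k) hk
  · rfl
  · simp [zeroCons, hgg' k (by omega)]

lemma exists_strictMono_iff_first {P : (ℕ → ℕ) → Prop}
    (hhom : ∀ τ : ℕ → ℕ, ∃ θ, StrictMono θ ∧ IsHomogeneous (fun g => P (τ ∘ zeroCons g)) θ) :
    ∃ a : ℕ → ℕ, StrictMono a ∧ ∃ col : ℕ → Prop, ∀ ψ, StrictMono ψ → (P (a ∘ ψ) ↔ col (ψ 0)) := by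
  choose θ hθ hhom using hhom
  -- `stage (i + 1)` is a homogeneous subsequence of the tail of `stage i` after its first term
  -- `a i`; `col i` is its colour.
  let stage : ℕ → ℕ → ℕ := fun i => Nat.rec id (fun _ τ => τ ∘ fun k => θ τ k + 1) i
  have stage_mono : ∀ i, StrictMono (stage i) := by
    intro i
    induction i with
    | zero => exact strictMono_id
    | succ i hi => exact hi.comp fun a b hab => Nat.succ_lt_succ (hθ _ hab)
  have range_anti : Antitone fun i => Set.range (stage i) :=
    antitone_nat_of_succ_le fun i => Set.range_comp_subset_range _ _
  let a : ℕ → ℕ := fun i => stage i 0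
  have a_mono : StrictMono a := strictMono_nat_of_lt_succ fun i =>
    stage_mono i (Nat.succ_pos (θ (stage i) 0))
  refine ⟨a, a_mono, fun i => ∀ ψ, StrictMono ψ → P (stage i ∘ zeroCons (θ (stage i) ∘ ψ)),
    fun ψ hψ => ?_⟩
  set i := ψ 0
  have tail_mono : StrictMono fun k => a (ψ (k + 1)) :=
    a_mono.comp (hψ.comp fun _ _ h => Nat.succ_lt_succ h)
  have tail_range : Set.range (fun k => a (ψ (k + 1))) ⊆ Set.range (stage (i + 1)) := by
    rintro _ ⟨k, rfl⟩
    exact range_anti (hψ (Nat.succ_pos k)) ⟨0, rfl⟩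
  obtain ⟨ρ, hρ, htail⟩ :=
    (stage_mono (i + 1)).exists_eq_comp_of_range_subset tail_mono tail_range
  have hsplit : a ∘ ψ = stage i ∘ zeroCons (θ (stage i) ∘ ρ) := by
    funext k
    cases k with
    | zero => rfl
    | succ k => exact congrFun htail k
  rw [hsplit]
  exact ⟨fun hP χ hχ => ((hhom (stage i)).resolve_right fun hneg => hneg ρ hρ hP) χ hχ,
    fun hcol => hcol ρ hρ⟩

lemma exists_isHomogeneous_of_iff_first {P : (ℕ → ℕ) → Prop} {a : ℕ → ℕ} (ha : StrictMono a)
    {col : ℕ → Prop} (hcol : ∀ ψ, StrictMono ψ → (P (a ∘ ψ) ↔ col (ψ 0))) :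
    ∃ φ, StrictMono φ ∧ IsHomogeneous P φ := by
  by_cases hpos : ∃ᶠ i in atTop, col i
  · obtain ⟨e, he, hce⟩ := extraction_of_frequently_atTop hpos
    exact ⟨a ∘ e, ha.comp he, .inl fun ψ hψ => (hcol _ (he.comp hψ)).2 (hce _)⟩
  · obtain ⟨e, he, hce⟩ := extraction_of_frequently_atTop (not_frequently.1 hpos).frequently
    exact ⟨a ∘ e, ha.comp he, .inr fun ψ hψ hP => hce _ ((hcol _ (he.comp hψ)).1 hP)⟩

theorem exists_strictMono_isHomogeneous (N : ℕ) (P : (ℕ → ℕ) → Prop) (hP : DependsOnFirst N P) :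
    ∃ φ, StrictMono φ ∧ IsHomogeneous P φ := by
  induction N generalizing P with
  | zero =>
    refine ⟨id, strictMono_id, ?_⟩
    by_cases h : P id
    · exact .inl fun ψ _ => hP _ _ (by simp) h
    · exact .inr fun ψ _ hψ => h (hP _ _ (by simp) hψ)
  | succ N ih =>
    obtain ⟨a, ha, col, hcol⟩ := exists_strictMono_iff_first fun τ => ih _ (hP.comp_zeroCons τ)
    exact exists_isHomogeneous_of_iff_first ha hcol

theorem exists_strictMono_diagonal (S : ℕ → (ℕ → ℕ) → Prop)
    (hS : ∀ i (φ : ℕ → ℕ), ∃ ψ : ℕ → ℕ, StrictMono ψ ∧ ∀ χ, StrictMono χ → S i (φ ∘ ψ ∘ χ)) :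
    ∃ d : ℕ → ℕ, StrictMono d ∧ ∀ i χ, StrictMono χ → i ≤ χ 0 → S i (d ∘ χ) := by
  choose ψ hψ hSψ using hS
  let Φ : ℕ → ℕ → ℕ := fun i => Nat.rec (ψ 0 id) (fun i φ => φ ∘ ψ (i + 1) φ) i
  have Φ_mono : ∀ i, StrictMono (Φ i) := by
    intro i
    induction i with
    | zero => exact hψ 0 id
    | succ i hi => exact hi.comp (hψ _ _)
  have Φ_spec : ∀ i χ, StrictMono χ → S i (Φ i ∘ χ) := by
    rintro (_ | i)
    · exact hSψ 0 id
    · exact hSψ _ _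
  have range_anti : Antitone fun i => Set.range (Φ i) :=
    antitone_nat_of_succ_le fun i => Set.range_comp_subset_range _ _
  have d_mono : StrictMono fun k => Φ k k := strictMono_nat_of_lt_succ fun k =>
    Φ_mono k ((Nat.lt_succ_self k).trans_le (hψ _ _).le_apply)
  refine ⟨fun k => Φ k k, d_mono, fun i χ hχ hi => ?_⟩
  obtain ⟨ρ, hρ, hdχ⟩ := (Φ_mono i).exists_eq_comp_of_range_subset (d_mono.comp hχ) <| by
    rintro _ ⟨k, rfl⟩
    exact range_anti (hi.trans (hχ.monotone (Nat.zero_le k))) ⟨χ k, rfl⟩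
  rw [hdχ]
  exact Φ_spec i ρ hρ

theorem exists_strictMono_diagonal_of_countable {ι : Type*} [Countable ι] (S : ι → (ℕ → ℕ) → Prop)
    (hS : ∀ i (φ : ℕ → ℕ), ∃ ψ : ℕ → ℕ, StrictMono ψ ∧ ∀ χ, StrictMono χ → S i (φ ∘ ψ ∘ χ)) :
    ∃ d : ℕ → ℕ, StrictMono d ∧ ∀ i, ∃ N, ∀ χ, StrictMono χ → N ≤ χ 0 → S i (d ∘ χ) := by
  cases isEmpty_or_nonempty ι
  · exact ⟨id, strictMono_id, isEmptyElim⟩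
  obtain ⟨e, he⟩ := exists_surjective_nat ι
  obtain ⟨d, hd, hdS⟩ := exists_strictMono_diagonal (S ∘ e) fun n => hS (e n)
  refine ⟨d, hd, fun i => ?_⟩
  obtain ⟨n, rfl⟩ := he i
  exact ⟨n, hdS n⟩

end Ramsey

lemma sum_rpow_rpow_one_div_le {M : ℕ} {p c : ℝ} (hp : 0 < p) {a : Fin M → ℝ}
    (ha : ∀ i, 0 ≤ a i) (hac : ∀ i, a i ≤ c) (hc : 0 ≤ c) :
    (∑ i, a i ^ p) ^ (1 / p) ≤ (M : ℝ) ^ (1 / p) * c := by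
  calc (∑ i, a i ^ p) ^ (1 / p) ≤ (M * c ^ p) ^ (1 / p) := by
        refine Real.rpow_le_rpow (sum_nonneg fun i _ => Real.rpow_nonneg (ha i) p) ?_
          (by positivity)
        calc ∑ i, a i ^ p ≤ ∑ _i : Fin M, c ^ p := by gcongr with i; exacts [ha i, hac i]
          _ = M * c ^ p := by simp
    _ = (M : ℝ) ^ (1 / p) * c := by
        rw [Real.mul_rpow (by positivity) (by positivity), one_div, Real.rpow_rpow_inv hc hp.ne']

lemma exists_nat_mul_rpow_lt {p δ : ℝ} (hp : 1 < p) (hδ : 0 < δ) (C : ℝ) :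
    ∃ M : ℕ, C * (M : ℝ) ^ (1 / p) < M * δ := by
  have hexp : 0 < 1 - 1 / p := by
    rw [sub_pos, div_lt_one (by linarith)]
    exact hp
  obtain ⟨M, hMC, hM⟩ := (((tendsto_rpow_atTop hexp).comp tendsto_natCast_atTop_atTop)
    |>.eventually_gt_atTop (C / δ) |>.and (eventually_ge_atTop 1)).exists
  have hMpos : (0 : ℝ) < M := by exact_mod_cast hM
  refine ⟨M, ?_⟩
  calc C * (M : ℝ) ^ (1 / p) < (M : ℝ) ^ (1 - 1 / p) * δ * (M : ℝ) ^ (1 / p) := by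
        gcongr
        exact (div_lt_iff₀ hδ).1 hMC
    _ = M * δ := by
        rw [mul_right_comm, ← Real.rpow_add hMpos, sub_add_cancel, Real.rpow_one]

lemma exists_rat_frequently_lt_and_frequently_gt {a : ℕ → ℝ} {c : ℝ} (ha : ∀ k, |a k| ≤ c)
    (h : ¬ ∃ L, Tendsto a atTop (𝓝 L)) :
    ∃ r s : ℚ, r < s ∧ (∃ᶠ k in atTop, a k < r) ∧ ∃ᶠ k in atTop, (s : ℝ) < a k := by
  have hle : IsBoundedUnder (· ≤ ·) atTop a :=
    isBoundedUnder_of ⟨c, fun k => (abs_le.1 (ha k)).2⟩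
  have hge : IsBoundedUnder (· ≥ ·) atTop a :=
    isBoundedUnder_of ⟨-c, fun k => (abs_le.1 (ha k)).1⟩
  have hlt : liminf a atTop < limsup a atTop := (liminf_le_limsup hle hge).lt_of_ne
    fun heq => h ⟨_, tendsto_of_liminf_eq_limsup heq rfl hle hge⟩
  obtain ⟨r, hr, hrs⟩ := exists_rat_btwn hlt
  obtain ⟨s, hrs, hs⟩ := exists_rat_btwn hrs
  exact ⟨r, s, by exact_mod_cast hrs, frequently_lt_of_liminf_lt hle.isCoboundedUnder_ge hr,
    frequently_lt_of_lt_limsup hge.isCoboundedUnder_le hs⟩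

/-- In block `n` this picks `3n, 3n + 1` or `3n + 1, 3n + 2`, so that `3n + 1` lands at an odd
or an even position according to `ε n`. -/
def signedIndex (ε : ℕ → Bool) (j : ℕ) : ℕ :=
  3 * (j / 2) + j % 2 + if ε (j / 2) then 0 else 1

lemma strictMono_signedIndex (ε : ℕ → Bool) : StrictMono (signedIndex ε) := by
  refine strictMono_nat_of_lt_succ fun j => ?_
  obtain ⟨n, rfl | rfl⟩ := Nat.even_or_odd' j
  · have h1 : (2 * n + 1) / 2 = n := by omega
    simp only [signedIndex, h1, Nat.mul_div_cancel_left n two_pos]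
    split <;> omega
  · have h1 : (2 * n + 1) / 2 = n := by omega
    have h2 : (2 * n + 1 + 1) / 2 = n + 1 := by omega
    simp only [signedIndex, h1, h2]
    split <;> split <;> omega

lemma signedIndex_two_mul_add_one {ε : ℕ → Bool} {n : ℕ} (h : ε n = true) :
    signedIndex ε (2 * n + 1) = 3 * n + 1 := by
  have h1 : (2 * n + 1) / 2 = n := by omega
  simp [signedIndex, h1, h]

lemma signedIndex_two_mul {ε : ℕ → Bool} {n : ℕ} (h : ε n = false) :
    signedIndex ε (2 * n) = 3 * n + 1 := by
  simp [signedIndex, h]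

section Independence

variable {E : Type*} [NormedAddCommGroup E] [NormedSpace ℂ E] {p T : ℝ}

lemma HasTypeWithConstant.le_of_forall_le (htype : HasTypeWithConstant E p T) {M : ℕ}
    (x : Fin M → E) {a : ℝ} (ha : ∀ ε : Fin M → Bool, a ≤ ‖∑ i, if ε i then x i else -x i‖) :
    a ≤ T * (∑ i, ‖x i‖ ^ p) ^ (1 / p) := by
  refine le_trans ?_ (htype M x)
  calc a = (1 / 2 ^ M : ℝ) * ∑ _ε : Fin M → Bool, a := by simp [Finset.card_univ]
    _ ≤ _ := by gcongr with ε; exact ha ε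

/-- Rosenthal's `(r, s)`-independence (not linear independence). -/
def IsIndependent {M : ℕ} (f : Fin M → E) (r s : ℝ) : Prop :=
  ∀ ε : Fin M → Bool, ∃ x : StrongDual ℂ E, ‖x‖ ≤ 1 ∧
    ∀ i, if ε i then s ≤ (x (f i)).re else (x (f i)).re ≤ r

lemma IsIndependent.mul_sub_le_norm_sum {M : ℕ} {f : Fin M → E} {r s : ℝ}
    (hf : IsIndependent f r s) (ε : Fin M → Bool) :
    M * (s - r) ≤ 2 * ‖∑ i, if ε i then f i else -f i‖ := by
  obtain ⟨x, hx, hxε⟩ := hf ε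
  obtain ⟨x', hx', hx'ε⟩ := hf fun i => !ε i
  set w := ∑ i, if ε i then f i else -f i
  calc M * (s - r) = ∑ _i : Fin M, (s - r) := by simp [mul_sub]
    _ ≤ ∑ i, ((x - x') (if ε i then f i else -f i)).re := by
        gcongr with i
        have h := hxε i
        have h' := hx'ε i
        cases hε : ε i <;> simp [hε] at h h' ⊢ <;> linarith
    _ = ((x - x') w).re := by simp [w, map_sum, Complex.re_sum]
    _ ≤ ‖x - x'‖ * ‖w‖ := (Complex.re_le_norm _).trans ((x - x').le_opNorm w)
    _ ≤ 2 * ‖w‖ := by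
        gcongr
        calc ‖x - x'‖ ≤ ‖x‖ + ‖x'‖ := norm_sub_le x x'
          _ ≤ 2 := by linarith

lemma IsIndependent.mul_sub_le (htype : HasTypeWithConstant E p T) (hp : 0 < p) (hT : 0 ≤ T)
    {M : ℕ} {f : Fin M → E} {r s c : ℝ} (hfc : ∀ i, ‖f i‖ ≤ c) (hc : 0 ≤ c)
    (hf : IsIndependent f r s) : M * (s - r) ≤ 2 * T * (M : ℝ) ^ (1 / p) * c := by
  have h := htype.le_of_forall_le f (a := M * (s - r) / 2) fun ε => by
    linarith [hf.mul_sub_le_norm_sum ε]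
  have hsum := sum_rpow_rpow_one_div_le hp (fun i => norm_nonneg (f i)) hfc hc
  nlinarith

def Oscillates (f : ℕ → E) (r s : ℝ) (M : ℕ) : Prop :=
  ∃ x : StrongDual ℂ E, ‖x‖ ≤ 1 ∧ ∀ k < M, (x (f (2 * k))).re ≤ r ∧ s ≤ (x (f (2 * k + 1))).re

lemma dependsOnFirst_oscillates (f : ℕ → E) (r s : ℝ) (M : ℕ) :
    DependsOnFirst (2 * M) fun ψ => Oscillates (f ∘ ψ) r s M := by
  rintro g g' hgg' ⟨x, hx, hosc⟩
  refine ⟨x, hx, fun k hk => ?_⟩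
  simpa only [Function.comp_apply, hgg' (2 * k) (by omega), hgg' (2 * k + 1) (by omega)]
    using hosc k hk

lemma isIndependent_of_forall_oscillates {f : ℕ → E} {r s : ℝ} {M : ℕ}
    (h : ∀ ψ, StrictMono ψ → Oscillates (f ∘ ψ) r s M) :
    IsIndependent (fun i : Fin M => f (3 * i + 1)) r s := by
  intro ε
  let ε' : ℕ → Bool := fun n => if hn : n < M then ε ⟨n, hn⟩ else true
  obtain ⟨x, hx, hosc⟩ := h _ (strictMono_signedIndex ε')
  refine ⟨x, hx, fun i => ?_⟩
  have hε' : ε' i = ε i := dif_pos i.2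
  cases hε : ε i
  · simpa [signedIndex_two_mul (hε'.trans hε)] using (hosc i i.2).1
  · simpa [signedIndex_two_mul_add_one (hε'.trans hε)] using (hosc i i.2).2

lemma HasTypeWithConstant.exists_not_forall_oscillates (htype : HasTypeWithConstant E p T)
    (hp : 1 < p) (hT : 0 ≤ T) {c : ℝ} (hc : 0 ≤ c) {r s : ℝ} (hrs : r < s) :
    ∃ M, ∀ f : ℕ → E, (∀ n, ‖f n‖ ≤ c) → ¬ ∀ ψ, StrictMono ψ → Oscillates (f ∘ ψ) r s M := by
  obtain ⟨M, hM⟩ := exists_nat_mul_rpow_lt hp (sub_pos.2 hrs) (2 * T * c)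
  refine ⟨M, fun f hf hosc => ?_⟩
  have := (isIndependent_of_forall_oscillates hosc).mul_sub_le htype (by linarith) hT
    (fun _ => hf _) hc
  linarith

end Independence

section WeakCauchy

variable {E : Type*} [NormedAddCommGroup E] [NormedSpace ℂ E] {p T : ℝ}

lemma exists_tendsto_re_of_forall_not_oscillates {v : ℕ → E} {c : ℝ} (hv : ∀ k, ‖v k‖ ≤ c)
    (h : ∀ r s : ℚ, r < s → ∃ M N, ∀ ψ, StrictMono ψ → N ≤ ψ 0 → ¬ Oscillates (v ∘ ψ) r s M)
    {x : StrongDual ℂ E} (hx : ‖x‖ ≤ 1) : ∃ L, Tendsto (fun k => (x (v k)).re) atTop (𝓝 L) := by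
  by_contra hconv
  have hbound : ∀ k, |(x (v k)).re| ≤ c := fun k =>
    calc |(x (v k)).re| ≤ ‖x (v k)‖ := Complex.abs_re_le_norm _
      _ ≤ ‖x‖ * ‖v k‖ := x.le_opNorm _
      _ ≤ c := by nlinarith [norm_nonneg x, norm_nonneg (v k), hv k]
  obtain ⟨r, s, hrs, hr, hs⟩ := exists_rat_frequently_lt_and_frequently_gt hbound hconv
  obtain ⟨M, N, hM⟩ := h r s hrs
  have hfreq : ∀ n : ℕ, ∃ᶠ k : ℕ in atTop,
      N ≤ k ∧ if Even n then (x (v k)).re < r else (s : ℝ) < (x (v k)).re := by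
    intro n
    refine (eventually_ge_atTop N).and_frequently ?_
    split_ifs
    exacts [hr, hs]
  obtain ⟨ψ, hψ, hψP⟩ := extraction_forall_of_frequently hfreq
  refine hM ψ hψ (hψP 0).1 ⟨x, hx, fun k _ => ⟨?_, ?_⟩⟩
  · have hlow := (hψP (2 * k)).2
    rw [if_pos (even_two_mul k)] at hlow
    exact hlow.le
  · have hhigh := (hψP (2 * k + 1)).2
    rw [if_neg (Nat.not_even_two_mul_add_one k)] at hhigh
    exact hhigh.le

lemma exists_tendsto_of_forall_exists_tendsto_re {v : ℕ → E}
    (h : ∀ x : StrongDual ℂ E, ‖x‖ ≤ 1 → ∃ L, Tendsto (fun k => (x (v k)).re) atTop (𝓝 L))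
    (Φ : StrongDual ℂ E) : ∃ L, Tendsto (fun k => Φ (v k)) atTop (𝓝 L) := by
  have hre : ∀ Φ : StrongDual ℂ E, ∃ L, Tendsto (fun k => (Φ (v k)).re) atTop (𝓝 L) := by
    intro Φ
    set t : ℝ := ‖Φ‖ + 1
    have ht : 0 < t := by positivity
    have hx : ‖(t⁻¹ : ℂ) • Φ‖ ≤ 1 := by
      rw [norm_smul, norm_inv, Complex.norm_real, Real.norm_of_nonneg ht.le, inv_mul_le_one₀ ht]
      linarith
    obtain ⟨L, hL⟩ := h _ hx
    refine ⟨t * L, (hL.const_mul t).congr fun k => ?_⟩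
    simp [ht.ne']
  obtain ⟨L₁, h₁⟩ := hre Φ
  obtain ⟨L₂, h₂⟩ := hre (-Complex.I • Φ)
  refine ⟨L₁ + L₂ * Complex.I, ?_⟩
  simp only [FunLike.coe_smul, Pi.smul_apply, smul_eq_mul, neg_mul, Complex.neg_re,
    Complex.I_mul_re, neg_neg] at h₂
  simpa only [Complex.re_add_im] using
    (tendsto_ofReal_iff.2 h₁).add ((tendsto_ofReal_iff.2 h₂).mul_const Complex.I)

theorem HasTypeWithConstant.exists_weakCauchy_subseq (htype : HasTypeWithConstant E p T)
    (hp : 1 < p) (hT : 0 ≤ T) {f : ℕ → E} {c : ℝ} (hf : ∀ n, ‖f n‖ ≤ c) :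
    ∃ d : ℕ → ℕ, StrictMono d ∧
      ∀ Φ : StrongDual ℂ E, ∃ L, Tendsto (fun k => Φ (f (d k))) atTop (𝓝 L) := by
  choose M hM using fun q : {q : ℚ × ℚ // q.1 < q.2} =>
    htype.exists_not_forall_oscillates hp hT ((norm_nonneg _).trans (hf 0)) (Rat.cast_lt.2 q.2)
  obtain ⟨d, hd, hdS⟩ := exists_strictMono_diagonal_of_countable
    (fun q φ => ¬ Oscillates (f ∘ φ) q.1.1 q.1.2 (M q)) fun q φ => by
      obtain ⟨θ, hθ, hhom⟩ := exists_strictMono_isHomogeneous _ _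
        (dependsOnFirst_oscillates (f ∘ φ) q.1.1 q.1.2 (M q))
      exact ⟨θ, hθ, hhom.resolve_left (hM q (f ∘ φ ∘ θ) fun _ => hf _)⟩
  refine ⟨d, hd, exists_tendsto_of_forall_exists_tendsto_re fun x hx =>
    exists_tendsto_re_of_forall_not_oscillates (v := f ∘ d) (fun _ => hf _)
      (fun r s hrs => ?_) hx⟩
  obtain ⟨N, hN⟩ := hdS ⟨(r, s), hrs⟩
  exact ⟨_, N, hN⟩

end WeakCauchy

section Biorthogonal

variable {X : Type*} [NormedAddCommGroup X] [NormedSpace ℂ X] {y : ℕ → X} {K : ℝ}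

def IsBasicWithConstant (y : ℕ → X) (K : ℝ) : Prop :=
  ∀ (m n : ℕ) (a : ℕ → ℂ), m ≤ n →
    ‖∑ i ∈ range m, a i • y i‖ ≤ K * ‖∑ i ∈ range n, a i • y i‖

lemma IsBasicWithConstant.norm_smul_le (hb : IsBasicWithConstant y K) (a : ℕ → ℂ) {j n : ℕ}
    (hjn : j < n) : ‖a j • y j‖ ≤ 2 * K * ‖∑ i ∈ range n, a i • y i‖ := by
  calc ‖a j • y j‖ = ‖∑ i ∈ range (j + 1), a i • y i - ∑ i ∈ range j, a i • y i‖ := by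
        rw [sum_range_succ_sub_sum]
    _ ≤ ‖∑ i ∈ range (j + 1), a i • y i‖ + ‖∑ i ∈ range j, a i • y i‖ := norm_sub_le _ _
    _ ≤ K * ‖∑ i ∈ range n, a i • y i‖ + K * ‖∑ i ∈ range n, a i • y i‖ :=
        add_le_add (hb _ _ a hjn) (hb _ _ a hjn.le)
    _ = 2 * K * ‖∑ i ∈ range n, a i • y i‖ := by ring

lemma IsBasicWithConstant.norm_apply_le (hb : IsBasicWithConstant y K) (hnorm : ∀ n, ‖y n‖ = 1)
    (l : ℕ →₀ ℂ) (j : ℕ) : ‖l j‖ ≤ 2 * K * ‖Finsupp.linearCombination ℂ y l‖ := by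
  obtain ⟨n, hn⟩ := exists_nat_subset_range (insert j l.support)
  have hsum : Finsupp.linearCombination ℂ y l = ∑ i ∈ range n, l i • y i := by
    rw [Finsupp.linearCombination_apply]
    exact Finsupp.sum_of_support_subset _ ((subset_insert _ _).trans hn) _
      fun _ _ => zero_smul _ _
  simpa [hsum, norm_smul, hnorm] using hb.norm_smul_le l (mem_range.1 (hn (mem_insert_self _ _)))

lemma IsBasicWithConstant.linearIndependent (hb : IsBasicWithConstant y K)
    (hnorm : ∀ n, ‖y n‖ = 1) : LinearIndependent ℂ y :=
  linearIndependent_iff.2 fun l hl => Finsupp.ext fun j =>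
    norm_le_zero_iff.1 (by simpa [hl] using hb.norm_apply_le hnorm l j)

theorem IsBasicWithConstant.exists_biorthogonal (hb : IsBasicWithConstant y K)
    (hnorm : ∀ n, ‖y n‖ = 1) (hK : 0 ≤ K) :
    ∃ F : ℕ → StrongDual ℂ X, (∀ n, ‖F n‖ ≤ 2 * K) ∧
      ∀ n m, F n (y m) = if n = m then 1 else 0 := by
  have li := hb.linearIndependent hnorm
  let coord (j : ℕ) : StrongDual ℂ (Submodule.span ℂ (Set.range y)) :=
    LinearMap.mkContinuous (Finsupp.lapply j ∘ₗ li.repr) (2 * K) fun v => by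
      simpa [li.linearCombination_repr] using hb.norm_apply_le hnorm (li.repr v) j
  choose F hFext hFnorm using fun j => exists_extension_norm_eq _ (coord j)
  refine ⟨F, fun n => (hFnorm n).trans_le (LinearMap.mkContinuous_norm_le _ (by positivity) _),
    fun n m => ?_⟩
  have hmem : y m ∈ Submodule.span ℂ (Set.range y) := Submodule.subset_span ⟨m, rfl⟩
  rw [show y m = ((⟨y m, hmem⟩ : Submodule.span ℂ (Set.range y)) : X) from rfl, hFext]
  simp [coord, li.repr_eq_single m ⟨y m, hmem⟩ rfl, Finsupp.single_apply, eq_comm]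

end Biorthogonal

theorem weakly_null_biorthogonal_of_dual_type_general {X : Type*} [NormedAddCommGroup X]
    [NormedSpace ℂ X]
    (p T : ℝ) (hp : 1 < p) (hT : 0 < T)
    (htype : HasTypeWithConstant (StrongDual ℂ X) p T)
    (y : ℕ → X) (hnorm : ∀ n, ‖y n‖ = 1)
    (hbasic : ∃ K : ℝ, 1 ≤ K ∧ ∀ (m n : ℕ) (a : ℕ → ℂ), m ≤ n →
      ‖∑ i ∈ Finset.range m, a i • y i‖ ≤ K * ‖∑ i ∈ Finset.range n, a i • y i‖) :
    ∃ ψ : ℕ → ℕ, StrictMono ψ ∧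
      ∃ g : ℕ → StrongDual ℂ X,
        (∃ c : ℝ, ∀ k, ‖g k‖ ≤ c) ∧
        (∀ k j, g k (y (ψ j)) = if k = j then 1 else 0) ∧
        (∀ Φ : StrongDual ℂ (StrongDual ℂ X),
          Tendsto (fun k => Φ (g k)) atTop (𝓝 0)) := by
  obtain ⟨K, hK, hb⟩ := hbasic
  obtain ⟨F, hFnorm, hFy⟩ := IsBasicWithConstant.exists_biorthogonal hb hnorm (by linarith)
  obtain ⟨d, hd, hconv⟩ := htype.exists_weakCauchy_subseq hp hT.le hFnorm
  refine ⟨fun j => d (2 * j + 1), hd.comp fun a b h => by omega,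
    fun k => F (d (2 * k + 1)) - F (d (2 * k)), ⟨4 * K, fun k => ?_⟩, fun k j => ?_, fun Φ => ?_⟩
  · calc ‖F (d (2 * k + 1)) - F (d (2 * k))‖ ≤ ‖F (d (2 * k + 1))‖ + ‖F (d (2 * k))‖ :=
          norm_sub_le _ _
      _ ≤ 4 * K := by linarith [hFnorm (d (2 * k + 1)), hFnorm (d (2 * k))]
  · simp [hFy, hd.injective.eq_iff]
    omega
  · obtain ⟨L, hL⟩ := hconv Φ
    have h2k : Tendsto (fun k : ℕ => 2 * k) atTop atTop :=
      tendsto_atTop_mono (fun k => show k ≤ 2 * k by omega) tendsto_id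
    simpa using (hL.comp (tendsto_atTop_mono (fun k => by omega) h2k)).sub (hL.comp h2k)

/-- If `X*` has type `p > 1`, then every normalized weakly null basic sequence in `X` has
a subsequence admitting a bounded biorthogonal sequence of functionals which is weakly
null in `X*`. -/
theorem weakly_null_biorthogonal_of_dual_type {X : Type*} [NormedAddCommGroup X]
    [NormedSpace ℂ X] [CompleteSpace X]
    (p T : ℝ) (hp : 1 < p) (hT : 0 < T)
    (htype : HasTypeWithConstant (StrongDual ℂ X) p T)
    (y : ℕ → X) (hnorm : ∀ n, ‖y n‖ = 1)
    (hbasic : ∃ K : ℝ, 1 ≤ K ∧ ∀ (m n : ℕ) (a : ℕ → ℂ), m ≤ n →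
      ‖∑ i ∈ Finset.range m, a i • y i‖ ≤ K * ‖∑ i ∈ Finset.range n, a i • y i‖)
    (hweak : ∀ φ : X →L[ℂ] ℂ, Tendsto (fun n => φ (y n)) atTop (𝓝 0)) :
    ∃ ψ : ℕ → ℕ, StrictMono ψ ∧
      ∃ g : ℕ → StrongDual ℂ X,
        (∃ c : ℝ, ∀ k, ‖g k‖ ≤ c) ∧
        (∀ k j, g k (y (ψ j)) = if k = j then 1 else 0) ∧
        (∀ Φ : StrongDual ℂ (StrongDual ℂ X),
          Tendsto (fun k => Φ (g k)) atTop (𝓝 0)) :=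
  weakly_null_biorthogonal_of_dual_type_general p T hp hT htype y hnorm hbasic
end

section
/- For 1 ≤ p < ∞ and any integer N ≥ p, the space ℓ_p is P_N-Schur: if (x_n) is a sequence in ℓ_p such that Q(x_n) → 0 for every homogeneous polynomial Q on ℓ_p of degree at most N, then ‖x_n‖_p → 0. -/
/-!
If `x n` does not tend to `0`, some `‖x n‖ ≥ ε` infinitely often, while every coordinate of `x n`
tends to `0` (test against the coordinate functionals). A gliding hump then yields a subsequence
`x (n k)` lying within `ε / 4` of its restriction `u k` to consecutive disjoint blocks `B k`.
Let `φ k` be a functional of norm at most one that norms `u k` and only sees the coordinates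
in `B k`.
Since `N ≥ p`, `∑ k, |φ k y| ^ N ≤ ∑ k, ‖y|_{B k}‖ ^ N ≤ ‖y‖ ^ N`, so `y ↦ ∑ k, φ k y ^ N` is
an `N`-homogeneous polynomial, and at `x (n k)` its value has modulus at least
`(3ε/4) ^ N - (ε/4) ^ N > 0`.
-/

open Filter Topology Function
open scoped ENNReal

noncomputable def MultilinearMap.tsumOfSummable {R ι F : Type*} {M : ι → Type*} [Semiring R]
    [∀ i, AddCommMonoid (M i)] [∀ i, Module R (M i)] [AddCommMonoid F] [Module R F]
    [TopologicalSpace F] [T2Space F] [ContinuousAdd F] [ContinuousConstSMul R F]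
    (f : ℕ → MultilinearMap R M F) (hf : ∀ m, Summable fun k => f k m) :
    MultilinearMap R M F where
  toFun m := ∑' k, f k m
  map_update_add' m i x y := by
    simp only [MultilinearMap.map_update_add]
    exact (hf _).tsum_add (hf _)
  map_update_smul' m i c x := by
    simp only [MultilinearMap.map_update_smul]
    exact (hf _).tsum_const_smul c

theorem norm_prod_le_sum_norm_pow {𝕜 : Type*} [NormedField 𝕜] {n : ℕ} [NeZero n]
    (a : Fin n → 𝕜) : ‖∏ j, a j‖ ≤ ∑ j, ‖a j‖ ^ n := by
  obtain ⟨j₀, -, hj₀⟩ := Finset.exists_max_image Finset.univ (fun j => ‖a j‖) Finset.univ_nonempty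
  calc ‖∏ j, a j‖ = ∏ j, ‖a j‖ := norm_prod _ _
    _ ≤ ∏ _j : Fin n, ‖a j₀‖ :=
      Finset.prod_le_prod (fun j _ => norm_nonneg _) fun j _ => hj₀ j (Finset.mem_univ j)
    _ = ‖a j₀‖ ^ n := by simp
    _ ≤ ∑ j, ‖a j‖ ^ n :=
      Finset.single_le_sum (f := fun j => ‖a j‖ ^ n) (fun j _ => by positivity) (Finset.mem_univ j₀)

section PowerSumForm

variable {𝕜 E : Type*} [NontriviallyNormedField 𝕜] [NormedAddCommGroup E] [NormedSpace 𝕜 E]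
  {n : ℕ} {φ : ℕ → E →L[𝕜] 𝕜}

theorem summable_norm_pow_of_sum_le (hφ : ∀ y (s : Finset ℕ), ∑ k ∈ s, ‖φ k y‖ ^ n ≤ ‖y‖ ^ n)
    (y : E) : Summable fun k => ‖φ k y‖ ^ n :=
  summable_of_sum_le (fun _ => by positivity) (hφ y)

theorem norm_tsum_pow_le (hφ : ∀ y (s : Finset ℕ), ∑ k ∈ s, ‖φ k y‖ ^ n ≤ ‖y‖ ^ n) (y : E) :
    ‖∑' k, φ k y ^ n‖ ≤ ‖y‖ ^ n := by
  have hs := summable_norm_pow_of_sum_le hφ y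
  calc ‖∑' k, φ k y ^ n‖ ≤ ∑' k, ‖φ k y ^ n‖ := norm_tsum_le_tsum_norm (by simpa using hs)
    _ = ∑' k, ‖φ k y‖ ^ n := by simp
    _ ≤ ‖y‖ ^ n := hs.tsum_le_of_sum_le (hφ y)

variable [NeZero n]

theorem summable_norm_prod_of_sum_le (hφ : ∀ y (s : Finset ℕ), ∑ k ∈ s, ‖φ k y‖ ^ n ≤ ‖y‖ ^ n)
    (m : Fin n → E) : Summable fun k => ‖∏ j, φ k (m j)‖ :=
  .of_nonneg_of_le (fun _ => norm_nonneg _) (fun _ => norm_prod_le_sum_norm_pow _)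
    (summable_sum fun j _ => summable_norm_pow_of_sum_le hφ (m j))

theorem norm_tsum_prod_le (hφ : ∀ y (s : Finset ℕ), ∑ k ∈ s, ‖φ k y‖ ^ n ≤ ‖y‖ ^ n)
    (m : Fin n → E) : ‖∑' k, ∏ j, φ k (m j)‖ ≤ ∑ j, ‖m j‖ ^ n := by
  have hpow := fun j => summable_norm_pow_of_sum_le hφ (m j)
  calc ‖∑' k, ∏ j, φ k (m j)‖ ≤ ∑' k, ‖∏ j, φ k (m j)‖ :=
        norm_tsum_le_tsum_norm (summable_norm_prod_of_sum_le hφ m)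
    _ ≤ ∑' k, ∑ j, ‖φ k (m j)‖ ^ n :=
        (summable_norm_prod_of_sum_le hφ m).tsum_le_tsum (fun k => norm_prod_le_sum_norm_pow _)
          (summable_sum fun j _ => hpow j)
    _ = ∑ j, ∑' k, ‖φ k (m j)‖ ^ n := Summable.tsum_finsetSum fun j _ => hpow j
    _ ≤ ∑ j, ‖m j‖ ^ n := Finset.sum_le_sum fun j _ => (hpow j).tsum_le_of_sum_le (hφ (m j))

variable [CompleteSpace 𝕜] in
theorem exists_continuousMultilinearMap_apply_eq_tsum_pow
    (hφ : ∀ y (s : Finset ℕ), ∑ k ∈ s, ‖φ k y‖ ^ n ≤ ‖y‖ ^ n) :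
    ∃ A : ContinuousMultilinearMap 𝕜 (fun _ : Fin n => E) 𝕜,
      ∀ y, A (fun _ => y) = ∑' k, φ k y ^ n := by
  let f : ℕ → MultilinearMap 𝕜 (fun _ : Fin n => E) 𝕜 := fun k =>
    ((ContinuousMultilinearMap.mkPiAlgebra 𝕜 (Fin n) 𝕜).compContinuousLinearMap
      fun _ => φ k).toMultilinearMap
  have hf : ∀ k m, f k m = ∏ j, φ k (m j) := fun k m => by simp [f]
  have hsum : ∀ m, Summable fun k => f k m := fun m => by
    simpa only [hf] using (summable_norm_prod_of_sum_le hφ m).of_norm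
  -- `∑ j, ‖m j‖ ^ n` is not a multilinear bound, but it yields one on the shell
  -- `1 / ‖c‖ ≤ ‖m j‖ < 1`, and `bound_of_shell` rescales.
  obtain ⟨c, hc⟩ := NormedField.exists_one_lt_norm 𝕜
  have hc0 : 0 < ‖c‖ := one_pos.trans hc
  let A := (MultilinearMap.tsumOfSummable f hsum).mkContinuous (n * ‖c‖ ^ n) fun m => by
    refine MultilinearMap.bound_of_shell _ (fun _ => one_pos) (fun _ => hc) (fun m hlo hhi => ?_) m
    have hprod : 1 ≤ ‖c‖ ^ n * ∏ i, ‖m i‖ := by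
      calc (1 : ℝ) = ‖c‖ ^ n * ∏ _i : Fin n, 1 / ‖c‖ := by simp [hc0.ne']
        _ ≤ ‖c‖ ^ n * ∏ i, ‖m i‖ := by gcongr with i; exact hlo i
    calc ‖MultilinearMap.tsumOfSummable f hsum m‖ ≤ ∑ j, ‖m j‖ ^ n := by
          simpa [MultilinearMap.tsumOfSummable, hf] using norm_tsum_prod_le hφ m
      _ ≤ ∑ _j : Fin n, 1 := Finset.sum_le_sum fun j _ => pow_le_one₀ (norm_nonneg _) (hhi j).le
      _ = n * 1 := by simp
      _ ≤ n * (‖c‖ ^ n * ∏ i, ‖m i‖) := by gcongr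
      _ = _ := by ring
  exact ⟨A, fun y => by simp [A, MultilinearMap.tsumOfSummable, hf]⟩

end PowerSumForm

theorem exists_gliding_hump {P : ℕ → Prop} {H T : ℕ → ℕ → Prop} (hP : ∃ᶠ n in atTop, P n)
    (hH : ∀ m, ∀ᶠ n in atTop, H m n) (hT : ∀ n, ∀ᶠ m in atTop, T n m) :
    ∃ n m : ℕ → ℕ, StrictMono n ∧ Monotone m ∧
      ∀ k, P (n k) ∧ H (m k) (n k) ∧ T (n k) (m (k + 1)) := by
  have step : ∀ q : ℕ × ℕ, ∃ q' : ℕ × ℕ,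
      q.1 < q'.1 ∧ q.2 ≤ q'.2 ∧ T q.1 q'.2 ∧ P q'.1 ∧ H q'.2 q'.1 := by
    rintro ⟨a, b⟩
    obtain ⟨b', hb', hTb'⟩ := ((eventually_ge_atTop b).and (hT a)).exists
    obtain ⟨a', hPa', ha', hHa'⟩ :=
      (hP.and_eventually ((eventually_gt_atTop a).and (hH b'))).exists
    exact ⟨(a', b'), ha', hb', hTb', hPa', hHa'⟩
  obtain ⟨a₀, hPa₀, hHa₀⟩ := (hP.and_eventually (hH 0)).exists
  choose g hg using step
  set q : ℕ → ℕ × ℕ := fun k => g^[k] (a₀, 0)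
  have hq : ∀ k, q (k + 1) = g (q k) := fun k => Function.iterate_succ_apply' g k _
  have hPH : ∀ k, P (q k).1 ∧ H (q k).2 (q k).1
    | 0 => ⟨hPa₀, hHa₀⟩
    | k + 1 => by rw [hq]; exact (hg (q k)).2.2.2
  refine ⟨fun k => (q k).1, fun k => (q k).2, strictMono_nat_of_lt_succ fun k => ?_,
    monotone_nat_of_le_succ fun k => ?_, fun k => ⟨(hPH k).1, (hPH k).2, ?_⟩⟩
  · rw [hq]; exact (hg (q k)).1
  · rw [hq]; exact (hg (q k)).2.1
  · show T (q k).1 (q (k + 1)).2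
    rw [hq]; exact (hg (q k)).2.2.1

namespace lp

section BlockProj

variable (𝕜 : Type*) {α : Type*} [DecidableEq α] {E : α → Type*} [NontriviallyNormedField 𝕜]
  [∀ i, NormedAddCommGroup (E i)] [∀ i, NormedSpace 𝕜 (E i)] {p : ℝ≥0∞} [Fact (1 ≤ p)]

noncomputable def blockProj (s : Finset α) : lp E p →L[𝕜] lp E p :=
  ∑ i ∈ s, (singleContinuousLinearMap 𝕜 E p i).comp (evalCLM 𝕜 E p i)

variable {𝕜}

theorem blockProj_apply (s : Finset α) (f : lp E p) :
    blockProj 𝕜 s f = ∑ i ∈ s, lp.single p i (f i) := by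
  simp [blockProj]
  rfl

theorem blockProj_apply_apply (s : Finset α) (f : lp E p) (i : α) :
    blockProj 𝕜 s f i = if i ∈ s then f i else 0 := by
  rw [blockProj_apply, lp.coeFn_sum, Finset.sum_apply]
  simp [lp.single_apply]

theorem blockProj_blockProj_self (s : Finset α) (f : lp E p) :
    blockProj 𝕜 s (blockProj 𝕜 s f) = blockProj 𝕜 s f := by
  ext i
  simp only [blockProj_apply_apply]
  split_ifs <;> rfl

theorem blockProj_blockProj_of_disjoint {s t : Finset α} (h : Disjoint s t) (f : lp E p) :
    blockProj 𝕜 t (blockProj 𝕜 s f) = 0 := by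
  ext i
  simp only [blockProj_apply_apply, lp.coeFn_zero, Pi.zero_apply]
  split_ifs with ht hs <;> first | rfl | exact absurd ht (Finset.disjoint_left.1 h hs)

theorem blockProj_union {s t : Finset α} (h : Disjoint s t) :
    blockProj 𝕜 (s ∪ t) = (blockProj 𝕜 s : lp E p →L[𝕜] lp E p) + blockProj 𝕜 t :=
  Finset.sum_union h

theorem norm_blockProj_rpow (hp : p ≠ ∞) (s : Finset α) (f : lp E p) :
    ‖blockProj 𝕜 s f‖ ^ p.toReal = ∑ i ∈ s, ‖f i‖ ^ p.toReal := by
  rw [blockProj_apply]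
  exact lp.norm_sum_single (ENNReal.toReal_pos (zero_lt_one.trans_le Fact.out).ne' hp) _ s

theorem norm_blockProj_le (hp : p ≠ ∞) (s : Finset α) (f : lp E p) :
    ‖blockProj 𝕜 s f‖ ≤ ‖f‖ := by
  have hp₀ : 0 < p.toReal := ENNReal.toReal_pos (zero_lt_one.trans_le Fact.out).ne' hp
  rw [← Real.rpow_le_rpow_iff (norm_nonneg _) (norm_nonneg _) hp₀, norm_blockProj_rpow hp]
  exact lp.sum_rpow_le_norm_rpow hp₀ f s

theorem sum_norm_blockProj_rpow_le {ι : Type*} (hp : p ≠ ∞) {r : ℝ} (hr : p.toReal ≤ r)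
    {B : ι → Finset α} (hB : Pairwise (Disjoint on B)) (f : lp E p) (t : Finset ι) :
    ∑ k ∈ t, ‖blockProj 𝕜 (B k) f‖ ^ r ≤ ‖f‖ ^ r := by
  have hp₀ : 0 < p.toReal := ENNReal.toReal_pos (zero_lt_one.trans_le Fact.out).ne' hp
  have hsum : ∑ k ∈ t, ‖blockProj 𝕜 (B k) f‖ ^ p.toReal ≤ ‖f‖ ^ p.toReal := by
    simp_rw [norm_blockProj_rpow hp]
    rw [← Finset.sum_biUnion (hB.set_pairwise _)]
    exact lp.sum_rpow_le_norm_rpow hp₀ f _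
  have hsplit : ∀ a : ℝ, 0 ≤ a → a ^ r = a ^ (r - p.toReal) * a ^ p.toReal := fun a ha =>
    by rw [← Real.rpow_add' ha (by linarith), sub_add_cancel]
  calc ∑ k ∈ t, ‖blockProj 𝕜 (B k) f‖ ^ r
      ≤ ∑ k ∈ t, ‖f‖ ^ (r - p.toReal) * ‖blockProj 𝕜 (B k) f‖ ^ p.toReal := by
        gcongr with k
        rw [hsplit _ (norm_nonneg _)]
        gcongr
        exact norm_blockProj_le hp _ f
    _ ≤ ‖f‖ ^ (r - p.toReal) * ‖f‖ ^ p.toReal := by rw [← Finset.mul_sum]; gcongr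
    _ = ‖f‖ ^ r := (hsplit _ (norm_nonneg _)).symm

theorem tendsto_blockProj_of_tendsto_apply {ι : Type*} {l : Filter ι} {x : ι → lp E p}
    (hx : ∀ i, Tendsto (fun n => x n i) l (𝓝 0)) (s : Finset α) :
    Tendsto (fun n => blockProj 𝕜 s (x n)) l (𝓝 0) := by
  simp_rw [blockProj_apply]
  simpa using tendsto_finsetSum s fun i _ =>
    ((singleContinuousLinearMap 𝕜 E p i).continuous.tendsto 0).comp (hx i)

end BlockProj

section BlockForm

variable {𝕜 : Type*} {α : Type*} [DecidableEq α] {E : α → Type*} [RCLike 𝕜]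
  [∀ i, NormedAddCommGroup (E i)] [∀ i, NormedSpace 𝕜 (E i)] {p : ℝ≥0∞} [Fact (1 ≤ p)]

theorem exists_continuousMultilinearMap_norm_blockProj_sub_le (hp : p ≠ ∞) {n : ℕ} [NeZero n]
    (hn : p.toReal ≤ n) {B : ℕ → Finset α} (hB : Pairwise (Disjoint on B)) (v : ℕ → lp E p) :
    ∃ A : ContinuousMultilinearMap 𝕜 (fun _ : Fin n => lp E p) 𝕜, ∀ k,
      ‖blockProj 𝕜 (B k) (v k)‖ ^ n - ‖v k - blockProj 𝕜 (B k) (v k)‖ ^ n ≤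
        ‖A (fun _ => v k)‖ := by
  choose G hG hGv using fun k => exists_dual_vector'' 𝕜 (blockProj 𝕜 (B k) (v k))
  set φ : ℕ → lp E p →L[𝕜] 𝕜 := fun k => (G k).comp (blockProj 𝕜 (B k))
  have hφ : ∀ y (s : Finset ℕ), ∑ k ∈ s, ‖φ k y‖ ^ n ≤ ‖y‖ ^ n := fun y s => by
    calc ∑ k ∈ s, ‖φ k y‖ ^ n ≤ ∑ k ∈ s, ‖blockProj 𝕜 (B k) y‖ ^ (n : ℝ) := by
          simp_rw [Real.rpow_natCast]
          gcongr with k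
          exact (G k).le_of_opNorm_le (hG k) _ |>.trans_eq (one_mul _)
      _ ≤ ‖y‖ ^ (n : ℝ) := sum_norm_blockProj_rpow_le hp hn hB y s
      _ = ‖y‖ ^ n := Real.rpow_natCast _ _
  obtain ⟨A, hA⟩ := exists_continuousMultilinearMap_apply_eq_tsum_pow hφ
  refine ⟨A, fun k => ?_⟩
  -- `w` is invisible to `φ k` and `u` to every other `φ ℓ`, so the series at `v k` is
  -- the series at `w` plus the single term `‖u‖ ^ n`.
  set u := blockProj 𝕜 (B k) (v k)
  set w := v k - u
  have hφu : ∀ ℓ, φ ℓ u = if ℓ = k then (‖u‖ : 𝕜) else 0 := fun ℓ => by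
    split_ifs with h
    · subst h; simp [φ, u, blockProj_blockProj_self, hGv]
    · simp [φ, u, blockProj_blockProj_of_disjoint (hB (Ne.symm h))]
  have hφw : φ k w = 0 := by simp [φ, w, u, blockProj_blockProj_self]
  have hsplit : ∀ ℓ, φ ℓ (v k) ^ n = φ ℓ w ^ n + if ℓ = k then (‖u‖ : 𝕜) ^ n else 0 := by
    intro ℓ
    rw [show v k = u + w by simp [w], map_add, hφu]
    split_ifs with h
    · subst h; simp [hφw, zero_pow (NeZero.ne n)]
    · simp
  have hsum : Summable fun ℓ => φ ℓ w ^ n := by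
    refine Summable.of_norm ?_
    simpa using summable_norm_pow_of_sum_le hφ w
  have hAv : A (fun _ => v k) = ∑' ℓ, φ ℓ w ^ n + (‖u‖ : 𝕜) ^ n := by
    rw [hA, tsum_congr hsplit,
      hsum.tsum_add (summable_of_ne_finset_zero (s := {k}) (by simp_all)), tsum_ite_eq]
  have htri := norm_sub_le (∑' ℓ, φ ℓ w ^ n + (‖u‖ : 𝕜) ^ n) (∑' ℓ, φ ℓ w ^ n)
  rw [add_sub_cancel_left, norm_pow, RCLike.norm_ofReal, abs_norm] at htri
  rw [hAv]
  linarith [norm_tsum_pow_le hφ w]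

end BlockForm

section NatIndexed

variable {𝕜 : Type*} {E : ℕ → Type*} [NontriviallyNormedField 𝕜]
  [∀ i, NormedAddCommGroup (E i)] [∀ i, NormedSpace 𝕜 (E i)] {p : ℝ≥0∞} [Fact (1 ≤ p)]

theorem tendsto_blockProj_range (hp : p ≠ ∞) (f : lp E p) :
    Tendsto (fun b => blockProj 𝕜 (Finset.range b) f) atTop (𝓝 f) := by
  simp_rw [blockProj_apply]
  exact (lp.hasSum_single hp f).tendsto_sum_nat

theorem exists_subseq_norm_sub_blockProj_lt (hp : p ≠ ∞) {x : ℕ → lp E p}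
    (hx : ∀ i, Tendsto (fun n => x n i) atTop (𝓝 0)) {ε δ : ℝ}
    (hε : ∃ᶠ n in atTop, ε ≤ ‖x n‖) (hδ : 0 < δ) :
    ∃ n m : ℕ → ℕ, StrictMono n ∧ Monotone m ∧ ∀ k, ε ≤ ‖x (n k)‖ ∧
      ‖x (n k) - blockProj 𝕜 (Finset.Ico (m k) (m (k + 1))) (x (n k))‖ < δ := by
  have hhead : ∀ a, ∀ᶠ n in atTop, ‖blockProj 𝕜 (Finset.range a) (x n)‖ < δ / 2 := fun a =>
    (tendsto_blockProj_of_tendsto_apply hx _).norm.eventually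
      (gt_mem_nhds (by simpa using half_pos hδ))
  have htail : ∀ n, ∀ᶠ b in atTop, ‖x n - blockProj 𝕜 (Finset.range b) (x n)‖ < δ / 2 :=
    fun n => ((tendsto_iff_norm_sub_tendsto_zero.1 (tendsto_blockProj_range hp (x n))).eventually
      (gt_mem_nhds (half_pos hδ))).mono fun b hb => by rwa [norm_sub_rev]
  obtain ⟨n, m, hn, hm, hk⟩ := exists_gliding_hump hε hhead htail
  refine ⟨n, m, hn, hm, fun k => ⟨(hk k).1, ?_⟩⟩
  have hrange : Finset.range (m (k + 1)) = Finset.range (m k) ∪ Finset.Ico (m k) (m (k + 1)) := by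
    rw [Finset.range_eq_Ico, Finset.range_eq_Ico,
      Finset.Ico_union_Ico_eq_Ico (Nat.zero_le _) (hm (Nat.le_succ k))]
  have hdisj : Disjoint (Finset.range (m k)) (Finset.Ico (m k) (m (k + 1))) := by
    rw [Finset.range_eq_Ico]; exact Finset.Ico_disjoint_Ico_consecutive _ _ _
  have hdecomp : x (n k) - blockProj 𝕜 (Finset.Ico (m k) (m (k + 1))) (x (n k)) =
      blockProj 𝕜 (Finset.range (m k)) (x (n k)) +
        (x (n k) - blockProj 𝕜 (Finset.range (m (k + 1))) (x (n k))) := by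
    rw [hrange, blockProj_union hdisj, add_apply]
    abel
  rw [hdecomp]
  linarith [norm_add_le (blockProj 𝕜 (Finset.range (m k)) (x (n k)))
    (x (n k) - blockProj 𝕜 (Finset.range (m (k + 1))) (x (n k))), (hk k).2.1, (hk k).2.2]

end NatIndexed

section

variable {𝕜 : Type*} {E : ℕ → Type*} [RCLike 𝕜]
  [∀ i, NormedAddCommGroup (E i)] [∀ i, NormedSpace 𝕜 (E i)] {p : ℝ≥0∞} [Fact (1 ≤ p)]

theorem exists_continuousMultilinearMap_not_tendsto_zero (hp : p ≠ ∞) {n : ℕ} [NeZero n]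
    (hn : p.toReal ≤ n) {x : ℕ → lp E p} (hx : ∀ i, Tendsto (fun k => x k i) atTop (𝓝 0))
    {ε : ℝ} (hε₀ : 0 < ε) (hε : ∃ᶠ k in atTop, ε ≤ ‖x k‖) :
    ∃ A : ContinuousMultilinearMap 𝕜 (fun _ : Fin n => lp E p) 𝕜,
      ¬Tendsto (fun k => A (fun _ => x k)) atTop (𝓝 0) := by
  obtain ⟨ν, m, hν, hm, hk⟩ :=
    exists_subseq_norm_sub_blockProj_lt (𝕜 := 𝕜) hp hx hε (δ := ε / 4) (by positivity)
  have hB : Pairwise (Disjoint on fun k => Finset.Ico (m k) (m (k + 1))) := fun i j hij => by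
    simpa [← Finset.disjoint_coe] using hm.pairwise_disjoint_on_Ico_succ hij
  obtain ⟨A, hA⟩ :=
    exists_continuousMultilinearMap_norm_blockProj_sub_le (𝕜 := 𝕜) hp hn hB fun k => x (ν k)
  have hgap : 0 < (3 * ε / 4) ^ n - (ε / 4) ^ n :=
    sub_pos.2 (pow_lt_pow_left₀ (by linarith) (by positivity) (NeZero.ne n))
  have hbound : ∀ k, (3 * ε / 4) ^ n - (ε / 4) ^ n ≤ ‖A (fun _ => x (ν k))‖ := fun k => by
    obtain ⟨hεk, hδk⟩ := hk k
    refine le_trans ?_ (hA k)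
    have hblock := norm_sub_norm_le (x (ν k))
      (x (ν k) - blockProj 𝕜 (Finset.Ico (m k) (m (k + 1))) (x (ν k)))
    rw [sub_sub_cancel] at hblock
    gcongr
    linarith
  refine ⟨A, fun hlim => ?_⟩
  obtain ⟨k, hk'⟩ :=
    (NormedAddGroup.tendsto_nhds_zero.1 (hlim.comp hν.tendsto_atTop) _ hgap).exists
  exact (hbound k).not_gt hk'

end

end lp

/-- For `1 ≤ p < ∞` and any integer `N ≥ p`, the space `ℓ_p` is `P_N`-Schur: any sequence
that converges to `0` against every homogeneous polynomial of degree at most `N` is norm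
null. -/
theorem lp_PNSchur (p : ℝ) (hp : 1 ≤ p) [Fact (1 ≤ ENNReal.ofReal p)] (N : ℕ) (hN : p ≤ N) :
    ∀ x : ℕ → lp (fun _ : ℕ => ℂ) (ENNReal.ofReal p),
      (∀ M : ℕ, 1 ≤ M → M ≤ N →
        ∀ A : ContinuousMultilinearMap ℂ
            (fun _ : Fin M => lp (fun _ : ℕ => ℂ) (ENNReal.ofReal p)) ℂ,
          Tendsto (fun n => A (fun _ => x n)) atTop (𝓝 0)) →
      Tendsto (fun n => ‖x n‖) atTop (𝓝 0) := by
  intro x hx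
  have hN₁ : 1 ≤ N := by exact_mod_cast hp.trans hN
  have : NeZero N := ⟨by omega⟩
  have hcoord : ∀ i, Tendsto (fun n => x n i) atTop (𝓝 0) := fun i => by
    have := hx 1 le_rfl hN₁
      (ContinuousMultilinearMap.ofSubsingleton ℂ _ ℂ (0 : Fin 1) (lp.evalCLM ℂ _ _ i))
    simp only [ContinuousMultilinearMap.ofSubsingleton_apply_apply] at this
    exact this
  refine NormedAddGroup.tendsto_nhds_zero.2 fun ε hε => ?_
  simp only [norm_norm]
  by_contra hfreq
  simp only [not_eventually, not_lt] at hfreq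
  obtain ⟨A, hA⟩ := lp.exists_continuousMultilinearMap_not_tendsto_zero (𝕜 := ℂ)
    ENNReal.ofReal_ne_top (n := N) (by rwa [ENNReal.toReal_ofReal (by linarith)]) hcoord hε hfreq
  exact hA (hx N hN₁ le_rfl A)
end
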